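/- arXiv:1912.10947 — 5 statements merged into one kernel-verified Lean document; each statement's English description precedes it below -/
import Mathlib

section
/- Let (T(t))_{t≥0} be a C₀-semigroup on a complex Banach space X with infinitesimal generator A. For every x ∈ X and every t ≥ 0, one has e^{tσ_A(x)} ⊆ σ_{T(t)}(x); equivalently, if λ ∈ ℂ and e^{λt} belongs to the local resolvent set ρ_{T(t)}(x) of the bounded operator T(t) at x, then λ belongs to the local resolvent set ρ_A(x) of A at x. -/
open Filter Topology Metric

/-- A strongly continuous one-parameter semigroup of bounded linear operators:
`T 0 = I`, `T (s+t) = T s ∘ T t` for `s,t ≥ 0`, and `t ↦ T t x` is continuous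
on `[0,∞)` for every `x`. -/
structure IsC0Semigroup {X : Type*} [NormedAddCommGroup X] [NormedSpace ℂ X]
    (T : ℝ → X →L[ℂ] X) : Prop where
  map_zero : T 0 = 1
  map_add : ∀ s t : ℝ, 0 ≤ s → 0 ≤ t → T (s + t) = T s ∘L T t
  strong_continuity : ∀ x : X, ContinuousOn (fun t : ℝ => T t x) (Set.Ici 0)

/-- `A`, with domain `D`, is the infinitesimal generator of the semigroup `T`:
`D = {x : lim_{t→0⁺} (T t x - x)/t exists}` and `A x` is that limit on `D`. -/
structure IsGenerator {X : Type*} [NormedAddCommGroup X] [NormedSpace ℂ X]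
    (T : ℝ → X →L[ℂ] X) (D : Set X) (A : X → X) : Prop where
  mem_domain_iff : ∀ x : X,
    x ∈ D ↔ ∃ y : X, Tendsto (fun t : ℝ => t⁻¹ • (T t x - x)) (𝓝[>] 0) (𝓝 y)
  tendsto_of_mem : ∀ x ∈ D,
    Tendsto (fun t : ℝ => t⁻¹ • (T t x - x)) (𝓝[>] 0) (𝓝 (A x))

/-- The Cesàro average `C(t)x = t⁻¹ ∫₀ᵗ T(s)x ds`. -/
noncomputable def cesaro {X : Type*} [NormedAddCommGroup X] [NormedSpace ℂ X]
    (T : ℝ → X →L[ℂ] X) (t : ℝ) (x : X) : X :=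
  t⁻¹ • ∫ s in (0:ℝ)..t, T s x

/-- The local resolvent set of the (possibly unbounded) operator `A` with domain `D`
at `x`: the union of all open `U ⊆ ℂ` admitting an analytic `f : U → D` with
`(A - μ)f(μ) = x` on `U`. -/
def localResolventSet {X : Type*} [NormedAddCommGroup X] [NormedSpace ℂ X]
    (D : Set X) (A : X → X) (x : X) : Set ℂ :=
  {μ | ∃ U : Set ℂ, IsOpen U ∧ μ ∈ U ∧ ∃ f : ℂ → X, AnalyticOnNhd ℂ f U ∧
      ∀ z ∈ U, f z ∈ D ∧ A (f z) - z • f z = x}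

/-- The local spectrum `σ_A(x) = ℂ \ ρ_A(x)`. -/
def localSpectrum {X : Type*} [NormedAddCommGroup X] [NormedSpace ℂ X]
    (D : Set X) (A : X → X) (x : X) : Set ℂ :=
  (localResolventSet D A x)ᶜ

/-! For `y ∈ X` let `S_λ y = ∫₀ᵗ e^{λ(t-s)} T(s) y ds`. Shifting the integration variable
gives `T(h) S_λ y = e^{λh} ∫ₕ^{t+h} e^{λ(t-s)} T(s) y ds`, whose right derivative at `h = 0`
is `T(t) y - e^{λt} y + λ S_λ y`; hence `S_λ y ∈ D(A)` and
`(A - λ) S_λ y = T(t) y - e^{λt} y`.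
So if `(T(t) - z) f(z) = x` for `z` near `e^{μt}`, then `g(λ) = S_λ f(e^{λt})` satisfies
`(A - λ) g(λ) = x` for `λ` near `μ`, and `g` is holomorphic by differentiation under the
integral sign, the integrand being dominated thanks to the uniform boundedness principle. -/

open MeasureTheory Set

section

variable {X : Type*} [NormedAddCommGroup X] [NormedSpace ℂ X] {T : ℝ → X →L[ℂ] X}

theorem IsGenerator.mem_domain_and_apply_eq_of_hasDerivWithinAt {D : Set X} {A : X → X}
    (hA : IsGenerator T D A) (hT0 : T 0 = 1) {v w : X}
    (h : HasDerivWithinAt (fun s => T s v) w (Ici 0) 0) :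
    v ∈ D ∧ A v = w := by
  rw [← hasDerivWithinAt_Ioi_iff_Ici, hasDerivWithinAt_iff_tendsto_slope' self_notMem_Ioi] at h
  have hlim : Tendsto (fun s : ℝ => s⁻¹ • (T s v - v)) (𝓝[>] 0) (𝓝 w) :=
    h.congr fun s => by simp [slope_def_module, hT0]
  have hv : v ∈ D := (hA.mem_domain_iff v).2 ⟨w, hlim⟩
  exact ⟨hv, tendsto_nhds_unique (hA.tendsto_of_mem v hv) hlim⟩

namespace IsC0Semigroup

theorem exists_norm_le [CompleteSpace X] (hT : IsC0Semigroup T) (b : ℝ) :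
    ∃ M, ∀ s ∈ Icc 0 b, ‖T s‖ ≤ M := by
  have hbdd (x : X) : ∃ C, ∀ s : Icc (0 : ℝ) b, ‖T s x‖ ≤ C := by
    obtain ⟨C, hC⟩ := isCompact_Icc.exists_bound_of_continuousOn
      ((hT.strong_continuity x).mono Icc_subset_Ici_self)
    exact ⟨C, fun s => hC s s.2⟩
  obtain ⟨M, hM⟩ := banach_steinhaus hbdd
  exact ⟨M, fun s hs => hM ⟨s, hs⟩⟩

theorem continuousOn_smul_apply (hT : IsC0Semigroup T) {w : ℝ → ℂ} (hw : Continuous w)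
    (y : X) : ContinuousOn (fun s => w s • T s y) (Ici 0) :=
  hw.continuousOn.smul (hT.strong_continuity y)

theorem intervalIntegrable_smul_apply (hT : IsC0Semigroup T) {w : ℝ → ℂ} (hw : Continuous w)
    (y : X) {a b : ℝ} (ha : 0 ≤ a) (hb : 0 ≤ b) :
    IntervalIntegrable (fun s => w s • T s y) volume a b :=
  ((hT.continuousOn_smul_apply hw y).mono fun _ hs =>
    le_trans (le_min ha hb) hs.1).intervalIntegrable

end IsC0Semigroup

noncomputable def resolventIntegral (T : ℝ → X →L[ℂ] X) (t : ℝ) (μ : ℂ) (y : X) : X :=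
  ∫ s in (0 : ℝ)..t, Complex.exp (μ * (t - s)) • T s y

namespace IsC0Semigroup

variable [CompleteSpace X]

theorem apply_resolventIntegral (hT : IsC0Semigroup T) {t h : ℝ} (ht : 0 ≤ t) (hh : 0 ≤ h)
    (μ : ℂ) (y : X) :
    T h (resolventIntegral T t μ y)
      = Complex.exp (μ * h) • ∫ s in h..(t + h), Complex.exp (μ * (t - s)) • T s y := by
  have hshift : ∀ s ∈ uIcc 0 t, T h (Complex.exp (μ * (t - s)) • T s y)
      = Complex.exp (μ * h) • (Complex.exp (μ * (t - ↑(s + h))) • T (s + h) y) := by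
    intro s hs
    rw [uIcc_of_le ht] at hs
    rw [map_smul, ← ContinuousLinearMap.comp_apply, ← hT.map_add h s hh hs.1, add_comm h,
      smul_smul, ← Complex.exp_add]
    push_cast
    ring_nf
  rw [resolventIntegral, ← (T h).intervalIntegral_comp_comm
      (hT.intervalIntegrable_smul_apply (by fun_prop) y le_rfl ht),
    intervalIntegral.integral_congr hshift, intervalIntegral.integral_smul,
    intervalIntegral.integral_comp_add_right
      (fun s => Complex.exp (μ * (t - s)) • T s y), zero_add]

theorem hasDerivWithinAt_apply_resolventIntegral (hT : IsC0Semigroup T) {t : ℝ} (ht : 0 ≤ t)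
    (μ : ℂ) (y : X) :
    HasDerivWithinAt (fun h => T h (resolventIntegral T t μ y))
      (T t y - Complex.exp (μ * t) • y + μ • resolventIntegral T t μ y) (Ici 0) 0 := by
  set φ : ℝ → X := fun s => Complex.exp (μ * (t - s)) • T s y
  set Φ : ℝ → X := fun b => ∫ s in (0 : ℝ)..b, φ s
  have hφ : ContinuousOn φ (Ici 0) := hT.continuousOn_smul_apply (by fun_prop) y
  have hΦ {b : ℝ} (hb : 0 ≤ b) : HasDerivWithinAt Φ (φ b) (Ici b) b :=
    intervalIntegral.integral_hasDerivWithinAt_right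
      (hT.intervalIntegrable_smul_apply (by fun_prop) y le_rfl hb)
      ((hφ.mono (Ioi_subset_Ici hb)).stronglyMeasurableAtFilter_nhdsWithin measurableSet_Ioi b)
      ((hφ b hb).mono (Ioi_subset_Ici hb))
  have hexp : HasDerivWithinAt (fun h : ℝ => Complex.exp (μ * h)) μ (Ici 0) 0 := by
    simpa using (((hasDerivAt_id (0 : ℂ)).const_mul μ).cexp.comp_ofReal).hasDerivWithinAt
  have hdiff : HasDerivWithinAt (fun h => Φ (t + h) - Φ h) (φ t - φ 0) (Ici 0) 0 := by
    refine HasDerivWithinAt.sub ?_ (hΦ le_rfl)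
    simpa [Function.comp_def] using (hΦ ht).scomp_of_eq 0
      ((hasDerivAt_id 0).const_add t).hasDerivWithinAt (fun h hh => by simpa using hh) (by simp)
  have hB : resolventIntegral T t μ y = Φ t - Φ 0 := by simp [Φ, φ, resolventIntegral]
  refine (hexp.smul hdiff).congr_of_mem (fun h hh => ?_) self_mem_Ici |>.congr_deriv ?_
  · rw [hT.apply_resolventIntegral ht hh, ← intervalIntegral.integral_interval_sub_left
      (hT.intervalIntegrable_smul_apply (by fun_prop) y le_rfl (by linarith [mem_Ici.1 hh]))
      (hT.intervalIntegrable_smul_apply (by fun_prop) y le_rfl hh)]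
    rfl
  · simp [φ, hB, hT.map_zero]

theorem differentiableAt_resolventIntegral (hT : IsC0Semigroup T) {t : ℝ} (ht : 0 ≤ t)
    {y : ℂ → X} {l₀ : ℂ} (hy : AnalyticAt ℂ y l₀) :
    DifferentiableAt ℂ (fun l => resolventIntegral T t l (y l)) l₀ := by
  obtain ⟨ε, hε, hyε⟩ :=
    Metric.nhds_basis_closedBall.eventually_iff.1 hy.eventually_analyticAt
  set w : ℂ → ℝ → ℂ := fun l s => Complex.exp (l * (t - s))
  set v : ℂ × ℝ → X := fun p => w p.1 p.2 • (((t : ℂ) - p.2) • y p.1 + deriv y p.1)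
  have hv : ContinuousOn v (closedBall l₀ ε ×ˢ Icc 0 t) := by
    rintro ⟨l, s⟩ ⟨hl, -⟩
    have hyl := (hyε hl).continuousAt
    have hy'l := (hyε hl).deriv.continuousAt
    refine ContinuousAt.continuousWithinAt ?_
    fun_prop
  obtain ⟨C, hC⟩ :=
    ((isCompact_closedBall l₀ ε).prod isCompact_Icc).exists_bound_of_continuousOn hv
  obtain ⟨M, hM⟩ := hT.exists_norm_le t
  refine (intervalIntegral.hasDerivAt_integral_of_dominated_loc_of_deriv_le
    (F' := fun l s => (w l s * (t - s)) • T s (y l) + w l s • T s (deriv y l))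
    (bound := fun _ => M * C) (closedBall_mem_nhds l₀ hε)
    (Eventually.of_forall fun l => ?_) ?_ ?_ ?_ intervalIntegrable_const ?_).2.differentiableAt
  · exact (hT.intervalIntegrable_smul_apply (by fun_prop) _ le_rfl ht)
      |>.aestronglyMeasurable_restrict_uIoc
  · exact hT.intervalIntegrable_smul_apply (by fun_prop) _ le_rfl ht
  · exact ((hT.intervalIntegrable_smul_apply (by fun_prop) _ le_rfl ht).add
      (hT.intervalIntegrable_smul_apply (by fun_prop) _ le_rfl ht))
      |>.aestronglyMeasurable_restrict_uIoc
  · refine Eventually.of_forall fun s hs l hl => ?_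
    have hs' : s ∈ Icc 0 t := Ioc_subset_Icc_self (uIoc_of_le ht ▸ hs)
    have hF' : (w l s * (t - s)) • T s (y l) + w l s • T s (deriv y l) = T s (v (l, s)) := by
      simp only [v, smul_add, smul_smul, ContinuousLinearMap.map_add,
        ContinuousLinearMap.map_smul]
    rw [hF']
    exact ((T s).le_of_opNorm_le (hM s hs') _).trans
      (mul_le_mul_of_nonneg_left (hC (l, s) ⟨hl, hs'⟩) ((norm_nonneg _).trans (hM s hs')))
  · refine Eventually.of_forall fun s _ l hl => ?_
    have hw : HasDerivAt (fun l => w l s) (w l s * (t - s)) l := by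
      simpa using ((hasDerivAt_id l).mul_const ((t : ℂ) - s)).cexp
    exact hw.smul ((T s).hasFDerivAt.comp_hasDerivAt l (hyε hl).differentiableAt.hasDerivAt)
      |>.congr_deriv (add_comm _ _)

end IsC0Semigroup

end

/-- `e^{t σ_A(x)} ⊆ σ_{T(t)}(x)` for all `t ≥ 0`: if `e^{μt}` belongs to the local
resolvent set of the bounded operator `T(t)` at `x`, then `μ` belongs to the local
resolvent set of `A` at `x`. -/
theorem exp_localSpectrum_subset
    {X : Type*} [NormedAddCommGroup X] [NormedSpace ℂ X] [CompleteSpace X]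
    (T : ℝ → X →L[ℂ] X) (D : Set X) (A : X → X)
    (hT : IsC0Semigroup T) (hA : IsGenerator T D A) :
    ∀ x : X, ∀ t : ℝ, 0 ≤ t → ∀ μ : ℂ,
      Complex.exp (μ * t) ∈ localResolventSet (Set.univ : Set X) (fun v => T t v) x →
      μ ∈ localResolventSet D A x := by
  rintro x t ht μ ⟨U, hU, hμU, f, hf, hfx⟩
  have hexp : Continuous fun l : ℂ => Complex.exp (l * t) := by fun_prop
  refine ⟨(fun l => Complex.exp (l * t)) ⁻¹' U, hU.preimage hexp, hμU,
    fun l => resolventIntegral T t l (f (Complex.exp (l * t))), ?_, fun l hl => ?_⟩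
  · refine DifferentiableOn.analyticOnNhd (fun l hl => ?_) (hU.preimage hexp)
    have hexp_l : AnalyticAt ℂ (fun l : ℂ => Complex.exp (l * t)) l := by fun_prop
    exact (hT.differentiableAt_resolventIntegral ht
      ((hf _ hl).comp_of_eq hexp_l rfl)).differentiableWithinAt
  · obtain ⟨hmem, hAeq⟩ := hA.mem_domain_and_apply_eq_of_hasDerivWithinAt hT.map_zero
      (hT.hasDerivWithinAt_apply_resolventIntegral ht l (f (Complex.exp (l * t))))
    refine ⟨hmem, ?_⟩
    rw [hAeq, add_sub_cancel_right]
    exact (hfx _ hl).2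
end

section
/- Let (T(t))_{t≥0} be a C₀-semigroup on a complex Banach space X with infinitesimal generator A such that ‖T(t)v‖/t → 0 as t → ∞ for every v ∈ X. If x belongs to the analytic core K(A), then T(t) is local mean ergodic at x, with lim_{t→∞} C(t)x = 0. -/
open Filter Topology Metric

/-!
An element `x` of the analytic core lies in the range of the generator: `x = A y` with
`y = x₁ ∈ D(A)`. The orbit of `y` is right-differentiable with derivative `T(s) A y`, so
`∫₀ᵗ T(s) x ds = T(t) y - y`, and hence `‖C(t) x‖ ≤ (‖T(t) y‖ + ‖y‖) / t → 0`.
-/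

theorem tendsto_inv_smul_sub_atTop_zero {X : Type*} [NormedAddCommGroup X] [NormedSpace ℝ X]
    {f : ℝ → X} (hf : Tendsto (fun t => ‖f t‖ / t) atTop (𝓝 0)) (c : X) :
    Tendsto (fun t : ℝ => t⁻¹ • (f t - c)) atTop (𝓝 0) := by
  have hfirst : Tendsto (fun t : ℝ => t⁻¹ • f t) atTop (𝓝 0) := by
    refine squeeze_zero_norm' ?_ hf
    filter_upwards [eventually_gt_atTop 0] with t ht
    rw [norm_smul, norm_inv, Real.norm_of_nonneg ht.le, inv_mul_eq_div]
  simpa [smul_sub] using hfirst.sub (tendsto_inv_atTop_zero.smul_const c)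

namespace IsC0Semigroup

variable {X : Type*} [NormedAddCommGroup X] [NormedSpace ℂ X] {T : ℝ → X →L[ℂ] X}
  {D : Set X} {A : X → X}

theorem apply_add (hT : IsC0Semigroup T) {s t : ℝ} (hs : 0 ≤ s) (ht : 0 ≤ t) (v : X) :
    T (s + t) v = T s (T t v) := by
  rw [hT.map_add s t hs ht]
  rfl

theorem hasDerivWithinAt_Ioi_zero (hT : IsC0Semigroup T) (hA : IsGenerator T D A) {y : X}
    (hy : y ∈ D) : HasDerivWithinAt (fun t => T t y) (A y) (Set.Ioi 0) 0 := by
  rw [hasDerivWithinAt_iff_tendsto_slope' (by simp)]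
  refine (hA.tendsto_of_mem y hy).congr fun t => ?_
  simp [slope_def_module, hT.map_zero]

theorem hasDerivWithinAt_Ioi (hT : IsC0Semigroup T) (hA : IsGenerator T D A) {y : X}
    (hy : y ∈ D) {s : ℝ} (hs : 0 ≤ s) :
    HasDerivWithinAt (fun t => T t y) (T s (A y)) (Set.Ioi s) s := by
  have hshift : HasDerivWithinAt (fun t => T (t - s) y) (A y) (Set.Ioi s) s := by
    have h := (hT.hasDerivWithinAt_Ioi_zero hA hy).scomp_of_eq s
      ((hasDerivAt_id' s).sub_const s).hasDerivWithinAt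
      (fun t ht => Set.mem_Ioi.mpr (sub_pos.mpr ht)) (sub_self s).symm
    rwa [one_smul] at h
  refine (((T s).restrictScalars ℝ).hasFDerivAt.comp_hasDerivWithinAt s hshift).congr
    (fun t ht => ?_) ?_
  · simpa using hT.apply_add hs (sub_pos.mpr ht).le y
  · simp [hT.map_zero]

theorem integral_apply_generator [CompleteSpace X] (hT : IsC0Semigroup T)
    (hA : IsGenerator T D A) {y : X} (hy : y ∈ D) {t : ℝ} (ht : 0 ≤ t) :
    ∫ s in (0 : ℝ)..t, T s (A y) = T t y - y := by
  have hcont : ∀ v : X, ContinuousOn (fun s => T s v) (Set.Icc 0 t) := fun v =>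
    (hT.strong_continuity v).mono Set.Icc_subset_Ici_self
  have hint : IntervalIntegrable (fun s => T s (A y)) MeasureTheory.volume 0 t :=
    (hcont (A y)).intervalIntegrable_of_Icc ht
  rw [intervalIntegral.integral_eq_sub_of_hasDeriv_right_of_le ht (hcont y)
    (fun s hs => hT.hasDerivWithinAt_Ioi hA hy hs.1.le) hint, hT.map_zero, one_apply_eq_self]

theorem tendsto_cesaro_generator [CompleteSpace X] (hT : IsC0Semigroup T)
    (hA : IsGenerator T D A) {y : X} (hy : y ∈ D)
    (hgrowth : Tendsto (fun t => ‖T t y‖ / t) atTop (𝓝 0)) :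
    Tendsto (fun t => cesaro T t (A y)) atTop (𝓝 0) := by
  refine (tendsto_inv_smul_sub_atTop_zero hgrowth y).congr' ?_
  filter_upwards [eventually_ge_atTop 0] with t ht
  rw [cesaro, hT.integral_apply_generator hA hy ht]

end IsC0Semigroup

/-- If `‖T(t)v‖/t → 0` for every `v` and `x` belongs to the analytic core `K(A)`
(there are `δ > 0` and a sequence `(xₙ) ⊆ D(A)` with `x₀ = x`, `A xₙ = xₙ₋₁` and
`‖xₙ‖ ≤ δⁿ ‖x‖`), then `T(t)` is local mean ergodic at `x` with limit `0`. -/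
theorem localMeanErgodic_of_mem_analyticCore
    {X : Type*} [NormedAddCommGroup X] [NormedSpace ℂ X] [CompleteSpace X]
    (T : ℝ → X →L[ℂ] X) (D : Set X) (A : X → X)
    (hT : IsC0Semigroup T) (hA : IsGenerator T D A)
    (hgrowth : ∀ v : X, Tendsto (fun t : ℝ => ‖T t v‖ / t) atTop (𝓝 0))
    (x : X)
    (hx : ∃ δ : ℝ, 0 < δ ∧ ∃ u : ℕ → X, u 0 = x ∧ (∀ n : ℕ, u n ∈ D) ∧
      (∀ n : ℕ, A (u (n + 1)) = u n) ∧ ∀ n : ℕ, ‖u n‖ ≤ δ ^ n * ‖x‖) :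
    Tendsto (fun t : ℝ => cesaro T t x) atTop (𝓝 0) := by
  obtain ⟨-, -, u, rfl, huD, huA, -⟩ := hx
  simpa [huA] using hT.tendsto_cesaro_generator hA (huD 1) (hgrowth (u 1))
end

section
/- Let (T(t))_{t≥0} be a C₀-semigroup on a complex Banach space X with infinitesimal generator A such that ‖T(t)v‖/t → 0 as t → ∞ for every v ∈ X. Suppose A has the SVEP, x ∈ D(A), and 0 ∉ σ_A(Ax). Then T(t) is local mean ergodic at x. -/
open Filter Topology Metric

/-- `A` (with domain `D`) has the single valued extension property at `μ₀`:
on every open disk centred at `μ₀`, the only analytic `f` with values in `D`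
satisfying `(z - A) f z = 0` is `f ≡ 0`. -/
def HasSVEPAt {X : Type*} [NormedAddCommGroup X] [NormedSpace ℂ X]
    (D : Set X) (A : X → X) (μ₀ : ℂ) : Prop :=
  ∀ r : ℝ, 0 < r → ∀ f : ℂ → X, AnalyticOnNhd ℂ f (ball μ₀ r) →
    (∀ z ∈ ball μ₀ r, f z ∈ D ∧ z • f z - A (f z) = 0) →
    ∀ z ∈ ball μ₀ r, f z = 0


/-! Expanding the local resolvent `f` of `A x` around `0` gives `A (f 0) = A x` and, by
closedness of the generator applied to the difference quotients `z⁻¹ • (f z - f 0)`,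
`f 0 = A (f' 0)`. Hence `x = u + A w` with `A u = 0` and `w = f' 0 ∈ D(A)`. The fixed vector `u`
has Cesàro means `u`, while `C(t) (A w) = t⁻¹ • (T t w - w) → 0` by the growth assumption. -/

section

open Set MeasureTheory

variable {X : Type*} [NormedAddCommGroup X] [NormedSpace ℂ X]
  {T : ℝ → X →L[ℂ] X} {D : Set X} {A : X → X}

namespace IsC0Semigroup

lemma intervalIntegrable (hT : IsC0Semigroup T) (v : X) {t : ℝ} (ht : 0 ≤ t) :
    IntervalIntegrable (fun s => T s v) volume 0 t :=
  ((hT.strong_continuity v).mono (by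
    rw [uIcc_of_le ht]; exact Icc_subset_Ici_self)).intervalIntegrable

lemma hasDerivWithinAt_integral [CompleteSpace X] (hT : IsC0Semigroup T) (v : X) {y : ℝ}
    (hy : 0 ≤ y) :
    HasDerivWithinAt (fun t => ∫ s in (0:ℝ)..t, T s v) (T y v) (Ici y) y := by
  have hIoi : Ioi y ⊆ Ici 0 := fun z hz => hy.trans (le_of_lt hz)
  exact intervalIntegral.integral_hasDerivWithinAt_right (hT.intervalIntegrable v hy)
    ⟨Ici 0, mem_of_superset self_mem_nhdsWithin hIoi,
      (hT.strong_continuity v).aestronglyMeasurable measurableSet_Ici⟩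
    ((hT.strong_continuity v y hy).mono hIoi)

lemma tendsto_inv_smul_integral [CompleteSpace X] (hT : IsC0Semigroup T) (v : X) :
    Tendsto (fun t : ℝ => t⁻¹ • ∫ s in (0:ℝ)..t, T s v) (𝓝[>] 0) (𝓝 v) := by
  have h := (hasDerivWithinAt_Ioi_iff_Ici.2 (hT.hasDerivWithinAt_integral v le_rfl))
  rw [hasDerivWithinAt_iff_tendsto_slope' self_notMem_Ioi, hT.map_zero] at h
  simpa [slope_fun_def] using h

lemma exists_norm_le_of_mem_Icc [CompleteSpace X] (hT : IsC0Semigroup T) (t : ℝ) :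
    ∃ C, ∀ s ∈ Icc 0 t, ‖T s‖ ≤ C := by
  obtain ⟨C, hC⟩ : ∃ C, ∀ s : Icc (0:ℝ) t, ‖T s‖ ≤ C := by
    refine banach_steinhaus fun v => ?_
    obtain ⟨C, hC⟩ := isCompact_Icc.exists_bound_of_continuousOn
      ((hT.strong_continuity v).mono Icc_subset_Ici_self)
    exact ⟨C, fun s => hC s s.2⟩
  exact ⟨C, fun s hs => hC ⟨s, hs⟩⟩

end IsC0Semigroup

lemma tendsto_inv_smul_sub_atTop_of_tendsto_norm_div {E : Type*} [NormedAddCommGroup E]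
    [NormedSpace ℝ E] {F : ℝ → E} (w : E)
    (hF : Tendsto (fun t => ‖F t‖ / t) atTop (𝓝 0)) :
    Tendsto (fun t : ℝ => t⁻¹ • (F t - w)) atTop (𝓝 0) := by
  rw [tendsto_zero_iff_norm_tendsto_zero]
  have hlim : Tendsto (fun t : ℝ => ‖F t‖ / t + ‖w‖ / t) atTop (𝓝 0) := by
    simpa using hF.add (tendsto_const_nhds.div_atTop tendsto_id)
  refine squeeze_zero' (Eventually.of_forall fun t => norm_nonneg _) ?_ hlim
  filter_upwards [eventually_gt_atTop (0:ℝ)] with t ht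
  rw [norm_smul, Real.norm_eq_abs, abs_inv, abs_of_pos ht]
  calc t⁻¹ * ‖F t - w‖ ≤ t⁻¹ * (‖F t‖ + ‖w‖) := by gcongr; exact norm_sub_le _ _
    _ = ‖F t‖ / t + ‖w‖ / t := by ring

namespace IsGenerator

lemma mem_and_apply_eq_of_tendsto (hA : IsGenerator T D A) {v y : X}
    (h : Tendsto (fun t : ℝ => t⁻¹ • (T t v - v)) (𝓝[>] 0) (𝓝 y)) : v ∈ D ∧ A v = y :=
  have hv : v ∈ D := (hA.mem_domain_iff v).2 ⟨y, h⟩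
  ⟨hv, tendsto_nhds_unique (hA.tendsto_of_mem v hv) h⟩

lemma sub (hA : IsGenerator T D A) {a b : X} (ha : a ∈ D) (hb : b ∈ D) :
    a - b ∈ D ∧ A (a - b) = A a - A b :=
  hA.mem_and_apply_eq_of_tendsto <|
    ((hA.tendsto_of_mem a ha).sub (hA.tendsto_of_mem b hb)).congr fun t => by
      simp only [map_sub, smul_sub]; abel

lemma smul (hA : IsGenerator T D A) {v : X} (hv : v ∈ D) (c : ℂ) :
    c • v ∈ D ∧ A (c • v) = c • A v :=
  hA.mem_and_apply_eq_of_tendsto <|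
    ((hA.tendsto_of_mem v hv).const_smul c).congr fun t => by
      rw [_root_.map_smul, ← smul_sub, smul_comm]

lemma hasDerivWithinAt_orbit (hT : IsC0Semigroup T) (hA : IsGenerator T D A) {v : X}
    (hv : v ∈ D) {y : ℝ} (hy : 0 ≤ y) :
    HasDerivWithinAt (fun s => T s v) (T y (A v)) (Ici y) y := by
  rw [← hasDerivWithinAt_Ioi_iff_Ici, hasDerivWithinAt_iff_tendsto_slope' self_notMem_Ioi]
  have hshift : Tendsto (fun z : ℝ => z - y) (𝓝[>] y) (𝓝[>] 0) :=
    tendsto_nhdsWithin_of_tendsto_nhds_of_eventually_within _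
      ((continuous_sub_right y).tendsto' y 0 (sub_self y) |>.mono_left nhdsWithin_le_nhds)
      (eventually_nhdsWithin_of_forall fun _ hz => sub_pos.2 (mem_Ioi.1 hz))
  refine ((((T y).continuous.tendsto _).comp (hA.tendsto_of_mem v hv)).comp hshift).congr' ?_
  filter_upwards [self_mem_nhdsWithin] with z hz
  have hsplit : T z v = T y (T (z - y) v) := by
    simpa using congrArg (· v) (hT.map_add y (z - y) hy (sub_pos.2 hz).le)
  simp [slope_def_module, hsplit, map_sub]

variable [CompleteSpace X]

lemma orbit_sub_eq_integral (hT : IsC0Semigroup T) (hA : IsGenerator T D A) {v : X}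
    (hv : v ∈ D) {t : ℝ} (ht : 0 ≤ t) :
    T t v - v = ∫ s in (0:ℝ)..t, T s (A v) := by
  have hprimitive : ContinuousOn (fun y => ∫ s in (0:ℝ)..y, T s (A v)) (Icc 0 t) := by
    simpa [uIcc_of_le ht] using intervalIntegral.continuousOn_primitive_interval'
      (hT.intervalIntegrable (A v) ht) left_mem_uIcc
  have key := eq_of_has_deriv_right_eq (f' := fun s => T s (A v))
    (fun y hy => hA.hasDerivWithinAt_orbit hT hv hy.1)
    (fun y hy => (hT.hasDerivWithinAt_integral (A v) hy.1).const_add v)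
    ((hT.strong_continuity v).mono Icc_subset_Ici_self) (continuousOn_const.add hprimitive)
    (by simp [hT.map_zero]) t ⟨ht, le_rfl⟩
  rw [key, add_sub_cancel_left]

lemma orbit_eq_self_of_apply_eq_zero (hT : IsC0Semigroup T) (hA : IsGenerator T D A) {u : X}
    (hu : u ∈ D) (hAu : A u = 0) {t : ℝ} (ht : 0 ≤ t) : T t u = u :=
  sub_eq_zero.1 <| by simp [hA.orbit_sub_eq_integral hT hu ht, hAu]

lemma mem_and_apply_eq_of_orbit_sub_eq_integral (hT : IsC0Semigroup T) (hA : IsGenerator T D A)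
    {v g : X}
    (h : ∀ t, 0 ≤ t → T t v - v = ∫ s in (0:ℝ)..t, T s g) : v ∈ D ∧ A v = g :=
  hA.mem_and_apply_eq_of_tendsto <| (hT.tendsto_inv_smul_integral g).congr' <|
    eventually_nhdsWithin_of_forall fun t ht => by simp only [h t (le_of_lt ht)]

lemma orbit_sub_eq_integral_of_tendsto (hT : IsC0Semigroup T) (hA : IsGenerator T D A)
    {ι : Type*} {l : Filter ι} [l.NeBot] {w : ι → X} {v g : X} (hwD : ∀ᶠ i in l, w i ∈ D)
    (hv : Tendsto w l (𝓝 v)) (hg : Tendsto (fun i => A (w i)) l (𝓝 g)) {t : ℝ} (ht : 0 ≤ t) :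
    T t v - v = ∫ s in (0:ℝ)..t, T s g := by
  obtain ⟨C, hC⟩ := hT.exists_norm_le_of_mem_Icc t
  refine tendsto_nhds_unique ((((T t).continuous.tendsto v).comp hv).sub hv) ?_
  rw [tendsto_iff_norm_sub_tendsto_zero]
  have hbound : Tendsto (fun i => C * ‖A (w i) - g‖ * t) l (𝓝 0) := by
    simpa using ((tendsto_iff_norm_sub_tendsto_zero.1 hg).const_mul C).mul_const t
  refine squeeze_zero' (Eventually.of_forall fun i => norm_nonneg _) ?_ hbound
  filter_upwards [hwD] with i hi
  rw [Function.comp_apply, hA.orbit_sub_eq_integral hT hi ht,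
    ← intervalIntegral.integral_sub (hT.intervalIntegrable _ ht) (hT.intervalIntegrable _ ht)]
  refine (intervalIntegral.norm_integral_le_of_norm_le_const fun s hs => ?_).trans_eq
    (by rw [sub_zero, abs_of_nonneg ht])
  rw [uIoc_of_le ht] at hs
  calc ‖T s (A (w i)) - T s g‖ = ‖T s (A (w i) - g)‖ := by rw [map_sub]
    _ ≤ ‖T s‖ * ‖A (w i) - g‖ := (T s).le_opNorm _
    _ ≤ C * ‖A (w i) - g‖ := by gcongr; exact hC s ⟨hs.1.le, hs.2⟩

lemma mem_and_apply_eq_of_tendsto_of_tendsto (hT : IsC0Semigroup T) (hA : IsGenerator T D A)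
    {ι : Type*} {l : Filter ι} [l.NeBot] {w : ι → X} {v g : X} (hwD : ∀ᶠ i in l, w i ∈ D)
    (hv : Tendsto w l (𝓝 v)) (hg : Tendsto (fun i => A (w i)) l (𝓝 g)) : v ∈ D ∧ A v = g :=
  hA.mem_and_apply_eq_of_orbit_sub_eq_integral hT fun _ ht =>
    hA.orbit_sub_eq_integral_of_tendsto hT hwD hv hg ht

lemma exists_apply_apply_eq_of_zero_mem_localResolventSet (hT : IsC0Semigroup T)
    (hA : IsGenerator T D A) {y : X} (h0 : (0 : ℂ) ∈ localResolventSet D A y) :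
    ∃ v ∈ D, A v = y ∧ ∃ w ∈ D, A w = v := by
  obtain ⟨U, hU, h0U, f, hf, hfD⟩ := h0
  have hf0 : f 0 ∈ D ∧ A (f 0) = y := by simpa using hfD 0 h0U
  refine ⟨f 0, hf0.1, hf0.2, ?_⟩
  have hquot : ∀ᶠ z in 𝓝[≠] (0 : ℂ), z⁻¹ • (f z - f 0) ∈ D ∧ A (z⁻¹ • (f z - f 0)) = f z := by
    filter_upwards [nhdsWithin_le_nhds (hU.mem_nhds h0U), self_mem_nhdsWithin]
      with z hzU hz0
    have hfz : f z ∈ D ∧ A (f z) = y + z • f z := by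
      simpa [sub_eq_iff_eq_add] using hfD z hzU
    obtain ⟨hsubD, hsubA⟩ := hA.sub hfz.1 hf0.1
    obtain ⟨hD, hAeq⟩ := hA.smul hsubD z⁻¹
    refine ⟨hD, ?_⟩
    rw [hAeq, hsubA, hfz.2, hf0.2, add_sub_cancel_left, smul_smul, inv_mul_cancel₀ hz0, one_smul]
  have hslope : Tendsto (fun z : ℂ => z⁻¹ • (f z - f 0)) (𝓝[≠] 0) (𝓝 (deriv f 0)) := by
    simpa [slope_fun_def] using
      hasDerivAt_iff_tendsto_slope.1 (hf 0 h0U).differentiableAt.hasDerivAt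
  have hAquot : Tendsto (fun z : ℂ => A (z⁻¹ • (f z - f 0))) (𝓝[≠] 0) (𝓝 (f 0)) :=
    ((hf 0 h0U).continuousAt.tendsto.mono_left nhdsWithin_le_nhds).congr'
      (hquot.mono fun z hz => hz.2.symm)
  exact ⟨deriv f 0,
    hA.mem_and_apply_eq_of_tendsto_of_tendsto hT (hquot.mono fun z hz => hz.1) hslope hAquot⟩

lemma cesaro_add_apply (hT : IsC0Semigroup T) (hA : IsGenerator T D A) {u w : X} (hu : u ∈ D)
    (hAu : A u = 0) (hw : w ∈ D) {t : ℝ} (ht : 0 < t) :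
    cesaro T t (u + A w) = u + t⁻¹ • (T t w - w) := by
  have hsplit : EqOn (fun s => T s (u + A w)) (fun s => u + T s (A w)) (uIcc 0 t) := by
    intro s hs
    rw [uIcc_of_le ht.le] at hs
    simp only [map_add, hA.orbit_eq_self_of_apply_eq_zero hT hu hAu hs.1]
  rw [cesaro, intervalIntegral.integral_congr hsplit,
    intervalIntegral.integral_add intervalIntegrable_const (hT.intervalIntegrable _ ht.le),
    intervalIntegral.integral_const, ← hA.orbit_sub_eq_integral hT hw ht.le, sub_zero,
    smul_add, smul_smul, inv_mul_cancel₀ ht.ne', one_smul]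

lemma tendsto_cesaro_add_apply (hT : IsC0Semigroup T) (hA : IsGenerator T D A) {u w : X}
    (hu : u ∈ D) (hAu : A u = 0) (hw : w ∈ D)
    (hgrowth : Tendsto (fun t : ℝ => ‖T t w‖ / t) atTop (𝓝 0)) :
    Tendsto (fun t : ℝ => cesaro T t (u + A w)) atTop (𝓝 u) := by
  have hlim := tendsto_const_nhds (x := u) |>.add
    (tendsto_inv_smul_sub_atTop_of_tendsto_norm_div w hgrowth)
  rw [add_zero] at hlim
  refine hlim.congr' ?_
  filter_upwards [eventually_gt_atTop 0] with t ht
  exact (hA.cesaro_add_apply hT hu hAu hw ht).symm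

end IsGenerator

end

theorem localMeanErgodic_of_zero_not_mem_localSpectrum_general
    {X : Type*} [NormedAddCommGroup X] [NormedSpace ℂ X] [CompleteSpace X]
    (T : ℝ → X →L[ℂ] X) (D : Set X) (A : X → X)
    (hT : IsC0Semigroup T) (hA : IsGenerator T D A)
    (hgrowth : ∀ v : X, Tendsto (fun t : ℝ => ‖T t v‖ / t) atTop (𝓝 0))
    (x : X) (hxD : x ∈ D)
    (h0 : (0 : ℂ) ∉ localSpectrum D A (A x)) :
    ∃ y : X, Tendsto (fun t : ℝ => cesaro T t x) atTop (𝓝 y) := by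
  obtain ⟨v, hvD, hAv, w, hwD, hAw⟩ :=
    hA.exists_apply_apply_eq_of_zero_mem_localResolventSet hT (not_not.1 h0)
  obtain ⟨huD, hAu⟩ := hA.sub hxD hvD
  refine ⟨x - v, ?_⟩
  simpa [hAw] using
    hA.tendsto_cesaro_add_apply hT huD (by rw [hAu, hAv, sub_self]) hwD (hgrowth w)

/-- If `‖T(t)v‖/t → 0` for every `v`, `A` has the SVEP, `x ∈ D(A)` and `0 ∉ σ_A(Ax)`,
then `T(t)` is local mean ergodic at `x`. -/
theorem localMeanErgodic_of_zero_not_mem_localSpectrum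
    {X : Type*} [NormedAddCommGroup X] [NormedSpace ℂ X] [CompleteSpace X]
    (T : ℝ → X →L[ℂ] X) (D : Set X) (A : X → X)
    (hT : IsC0Semigroup T) (hA : IsGenerator T D A)
    (hgrowth : ∀ v : X, Tendsto (fun t : ℝ => ‖T t v‖ / t) atTop (𝓝 0))
    (hSVEP : ∀ μ : ℂ, HasSVEPAt D A μ) (x : X) (hxD : x ∈ D)
    (h0 : (0 : ℂ) ∉ localSpectrum D A (A x)) :
    ∃ y : X, Tendsto (fun t : ℝ => cesaro T t x) atTop (𝓝 y) :=
  localMeanErgodic_of_zero_not_mem_localSpectrum_general T D A hT hA hgrowth x hxD h0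
end

section
/- Let (T(t))_{t≥0} be a C₀-semigroup on a complex Banach space X with infinitesimal generator A. Suppose A has the SVEP and T(t) is local mean ergodic at x ∈ X. If 0 is a pole of the local resolvent function x̂_A of A at x of order n, then n ≤ 1. -/
open Filter Topology Metric

/-- `α` is a pole of order `n` of the local resolvent function of `A` (with domain `D`)
at `x`: `α` is an isolated point of the local spectrum `σ_A(x)` and there is an
analytic function `f` near `α`, nonvanishing at `α`, such that
`(z-α)⁻ⁿ • f z` is the local resolvent function on a punctured disk around `α`
(i.e. it takes values in `D` and solves `(z - A) u = x` there). -/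
def IsLocalPoleOfOrder {X : Type*} [NormedAddCommGroup X] [NormedSpace ℂ X]
    (D : Set X) (A : X → X) (x : X) (α : ℂ) (n : ℕ) : Prop :=
  α ∉ localResolventSet D A x ∧
  ∃ r : ℝ, 0 < r ∧
    (∀ z : ℂ, z ≠ α → ‖z - α‖ < r → z ∈ localResolventSet D A x) ∧
    ∃ f : ℂ → X, AnalyticOnNhd ℂ f (ball α r) ∧ f α ≠ 0 ∧
      ∀ z ∈ ball α r, z ≠ α →
        ((z - α)⁻¹ ^ n • f z ∈ D ∧
          z • ((z - α)⁻¹ ^ n • f z) - A ((z - α)⁻¹ ^ n • f z) = x)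

/-!
Let `F s = ∫₀ˢ T u x du`. Mean ergodicity at `x` says that `F s / s` converges, so
`‖F s‖ ≤ M (1 + s)` and the Laplace transform `L z = ∫₀^∞ e^{-zs} F s ds` is analytic on
`Re z > 0`. The identity `T h (F s) = F (s + h) - F h` shows `L z ∈ D` with
`A (L z) = z L z - z⁻¹ x`, so `R z = z L z` (formally `∫₀^∞ e^{-zs} T s x ds`) solves
`(z - A) (R z) = x`, and `‖R t‖ = O(1/t)` as `t → 0⁺`. By the SVEP, `R` agrees with the local
resolvent function `z⁻ⁿ f z` on the disc of radius `t` about each small `t > 0`, hence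
`‖f t‖ = O(tⁿ⁻¹)`; for `n ≥ 2` this forces `f 0 = 0`, contradicting that `0` is a pole of
order `n`.
-/

open MeasureTheory Set

lemma Real.le_inv_mul_exp_mul {δ : ℝ} (hδ : 0 < δ) (s : ℝ) : s ≤ δ⁻¹ * Real.exp (δ * s) := by
  rw [le_inv_mul_iff₀ hδ]
  linarith [Real.add_one_le_exp (δ * s)]

lemma tendsto_inv_smul_intervalIntegral {E : Type*} [NormedAddCommGroup E] [NormedSpace ℝ E]
    [CompleteSpace E] {φ : ℝ → E} (hφ : ContinuousOn φ (Ici 0)) :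
    Tendsto (fun h : ℝ => h⁻¹ • ∫ s in (0 : ℝ)..h, φ s) (𝓝[>] 0) (𝓝 (φ 0)) := by
  have hderiv : HasDerivWithinAt (fun h => ∫ s in (0 : ℝ)..h, φ s) (φ 0) (Ici 0) 0 :=
    intervalIntegral.integral_hasDerivWithinAt_right (by simp)
      ((hφ.mono Ioi_subset_Ici_self).stronglyMeasurableAtFilter_nhdsWithin measurableSet_Ioi 0)
      ((hφ 0 self_mem_Ici).mono Ioi_subset_Ici_self)
  refine ((hasDerivWithinAt_iff_tendsto_slope' (lt_irrefl 0)).1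
    (hderiv.mono Ioi_subset_Ici_self)).congr fun h => ?_
  simp [slope]

lemma integral_cexp_neg_mul_Ioi {z : ℂ} (hz : 0 < z.re) :
    ∫ s in Ioi (0 : ℝ), Complex.exp (-z * s) = z⁻¹ := by
  rw [integral_exp_mul_complex_Ioi (by simpa using hz)]
  simp

section Laplace

variable {E : Type*} [NormedAddCommGroup E] [NormedSpace ℂ E]

noncomputable def laplaceTransform (g : ℝ → E) (z : ℂ) : E :=
  ∫ s in Ioi (0 : ℝ), Complex.exp (-z * s) • g s

variable {g : ℝ → E} {C ω : ℝ}

lemma norm_cexp_neg_mul_smul_le (hg : ∀ s, 0 < s → ‖g s‖ ≤ C * Real.exp (ω * s)) (z : ℂ)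
    {s : ℝ} (hs : 0 < s) :
    ‖Complex.exp (-z * s) • g s‖ ≤ C * Real.exp ((ω - z.re) * s) := by
  calc ‖Complex.exp (-z * s) • g s‖ = Real.exp (-z.re * s) * ‖g s‖ := by
        rw [norm_smul, Complex.norm_exp]; simp
    _ ≤ Real.exp (-z.re * s) * (C * Real.exp (ω * s)) := by gcongr; exact hg s hs
    _ = C * Real.exp ((ω - z.re) * s) := by rw [mul_left_comm, ← Real.exp_add]; ring_nf

lemma integrableOn_cexp_neg_mul_smul (hmeas : AEStronglyMeasurable g (volume.restrict (Ioi 0)))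
    (hg : ∀ s, 0 < s → ‖g s‖ ≤ C * Real.exp (ω * s)) {z : ℂ} (hz : ω < z.re) :
    IntegrableOn (fun s : ℝ => Complex.exp (-z * s) • g s) (Ioi 0) :=
  Integrable.mono' ((integrableOn_exp_mul_Ioi (by linarith) 0).const_mul C)
    ((by fun_prop : Continuous fun s : ℝ => Complex.exp (-z * s)).aestronglyMeasurable.smul hmeas)
    ((ae_restrict_mem measurableSet_Ioi).mono fun _ hs => norm_cexp_neg_mul_smul_le hg z hs)

lemma norm_laplaceTransform_le (hg : ∀ s, 0 < s → ‖g s‖ ≤ C * Real.exp (ω * s)) {z : ℂ}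
    (hz : ω < z.re) : ‖laplaceTransform g z‖ ≤ C / (z.re - ω) := by
  calc ‖laplaceTransform g z‖ ≤ ∫ s in Ioi (0 : ℝ), C * Real.exp ((ω - z.re) * s) :=
        norm_integral_le_of_norm_le ((integrableOn_exp_mul_Ioi (by linarith) 0).const_mul C)
          ((ae_restrict_mem measurableSet_Ioi).mono fun _ hs => norm_cexp_neg_mul_smul_le hg z hs)
    _ = C / (z.re - ω) := by
        rw [integral_const_mul, integral_exp_mul_Ioi (by linarith), mul_zero, Real.exp_zero,
          neg_div, ← div_neg, neg_sub, mul_one_div]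

lemma norm_cexp_neg_mul_mul_smul_le (hg : ∀ s, 0 < s → ‖g s‖ ≤ C * Real.exp (ω * s)) {δ : ℝ}
    (hδ : 0 < δ) {z : ℂ} (hz : ω + 2 * δ ≤ z.re) {s : ℝ} (hs : 0 < s) :
    ‖(Complex.exp (-z * s) * -s) • g s‖ ≤ C * δ⁻¹ * Real.exp (-δ * s) := by
  have hC : 0 ≤ C :=
    nonneg_of_mul_nonneg_left ((norm_nonneg _).trans (hg 1 one_pos)) (Real.exp_pos _)
  calc ‖(Complex.exp (-z * s) * -s) • g s‖ = s * ‖Complex.exp (-z * s) • g s‖ := by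
        rw [mul_comm, ← smul_smul, norm_smul, norm_neg, Complex.norm_real,
          Real.norm_of_nonneg hs.le]
    _ ≤ (δ⁻¹ * Real.exp (δ * s)) * (C * Real.exp ((ω - z.re) * s)) :=
        mul_le_mul (Real.le_inv_mul_exp_mul hδ s) (norm_cexp_neg_mul_smul_le hg z hs)
          (norm_nonneg _) (by positivity)
    _ ≤ (δ⁻¹ * Real.exp (δ * s)) * (C * Real.exp (-2 * δ * s)) := by
        gcongr
        linarith
    _ = C * δ⁻¹ * Real.exp (-δ * s) := by
        rw [mul_mul_mul_comm, ← Real.exp_add]; ring_nf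

lemma analyticOnNhd_laplaceTransform [CompleteSpace E]
    (hmeas : AEStronglyMeasurable g (volume.restrict (Ioi 0)))
    (hg : ∀ s, 0 < s → ‖g s‖ ≤ C * Real.exp (ω * s)) :
    AnalyticOnNhd ℂ (laplaceTransform g) {z | ω < z.re} := by
  refine DifferentiableOn.analyticOnNhd (fun z₀ (hz₀ : ω < z₀.re) => ?_)
    (isOpen_lt continuous_const Complex.continuous_re)
  set δ := (z₀.re - ω) / 3
  have hδ : 0 < δ := by unfold δ; linarith
  have hre : ∀ z ∈ ball z₀ δ, ω + 2 * δ ≤ z.re := fun z hz => by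
    have := (Complex.abs_re_le_norm (z - z₀)).trans_lt (mem_ball_iff_norm.1 hz)
    rw [Complex.sub_re] at this
    unfold δ at this ⊢
    linarith [(abs_lt.1 this).1]
  have hbound : ∀ᵐ s : ℝ ∂volume.restrict (Ioi 0), ∀ z ∈ ball z₀ δ,
      ‖(Complex.exp (-z * s) * -s) • g s‖ ≤ C * δ⁻¹ * Real.exp (-δ * s) :=
    (ae_restrict_mem measurableSet_Ioi).mono fun _ hs z hz =>
      norm_cexp_neg_mul_mul_smul_le hg hδ (hre z hz) hs
  obtain ⟨-, hderiv⟩ := hasDerivAt_integral_of_dominated_loc_of_deriv_le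
    (F := fun z (s : ℝ) => Complex.exp (-z * s) • g s) (ball_mem_nhds z₀ hδ)
    (Eventually.of_forall fun z =>
      (by fun_prop : Continuous fun s : ℝ => Complex.exp (-z * s)).aestronglyMeasurable.smul hmeas)
    (integrableOn_cexp_neg_mul_smul hmeas hg hz₀)
    ((by fun_prop : Continuous fun s : ℝ => Complex.exp (-z₀ * s) * -s).aestronglyMeasurable.smul
      hmeas)
    hbound ((integrableOn_exp_mul_Ioi (by linarith : -δ < 0) 0).const_mul _)
    (Eventually.of_forall fun (s : ℝ) z _ => by
      simpa using (((hasDerivAt_id z).neg.mul_const (s : ℂ)).cexp).smul_const (g s))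
  exact hderiv.differentiableAt.differentiableWithinAt

lemma integral_cexp_neg_mul_smul_comp_add {z : ℂ}
    (hint : IntegrableOn (fun s : ℝ => Complex.exp (-z * s) • g s) (Ioi 0)) {h : ℝ} (hh : 0 ≤ h) :
    ∫ s in Ioi (0 : ℝ), Complex.exp (-z * s) • g (s + h) =
      Complex.exp (z * h) •
        (laplaceTransform g z - ∫ s in (0 : ℝ)..h, Complex.exp (-z * s) • g s) := by
  rw [laplaceTransform, ← intervalIntegral.integral_Ioi_sub_Ioi hint hh, sub_sub_cancel,
    ← integral_smul]
  have := (measurePreserving_add_right volume h).setIntegral_preimage_emb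
    (measurableEmbedding_addRight h) (fun s => Complex.exp (z * h) • Complex.exp (-z * s) • g s)
    (Ioi h)
  rw [preimage_add_const_Ioi, sub_self] at this
  rw [← this]
  refine setIntegral_congr_fun measurableSet_Ioi fun s _ => ?_
  simp only [smul_smul, ← Complex.exp_add]
  push_cast
  ring_nf

end Laplace

namespace IsGenerator

variable {X : Type*} [NormedAddCommGroup X] [NormedSpace ℂ X]
  {T : ℝ → X →L[ℂ] X} {D : Set X} {A : X → X}

lemma mem_and_eq_of_tendsto (hA : IsGenerator T D A) {u y : X}
    (h : Tendsto (fun t : ℝ => t⁻¹ • (T t u - u)) (𝓝[>] 0) (𝓝 y)) : u ∈ D ∧ A u = y := by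
  have hu : u ∈ D := (hA.mem_domain_iff u).2 ⟨y, h⟩
  exact ⟨hu, tendsto_nhds_unique (hA.tendsto_of_mem u hu) h⟩

lemma sub_mem_and_map_sub (hA : IsGenerator T D A) {u v : X} (hu : u ∈ D) (hv : v ∈ D) :
    u - v ∈ D ∧ A (u - v) = A u - A v :=
  hA.mem_and_eq_of_tendsto <| ((hA.tendsto_of_mem u hu).sub (hA.tendsto_of_mem v hv)).congr
    fun t => by rw [map_sub, ← smul_sub, sub_sub_sub_comm]

lemma smul_mem_and_map_smul (hA : IsGenerator T D A) {u : X} (hu : u ∈ D) (c : ℂ) :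
    c • u ∈ D ∧ A (c • u) = c • A u :=
  hA.mem_and_eq_of_tendsto <| ((hA.tendsto_of_mem u hu).const_smul c).congr
    fun t => by rw [map_smul, ← smul_sub, smul_comm]

lemma eqOn_ball_of_hasSVEPAt (hA : IsGenerator T D A) {μ : ℂ} (hS : HasSVEPAt D A μ)
    {r : ℝ} (hr : 0 < r) {x : X} {u v : ℂ → X} (hu : AnalyticOnNhd ℂ u (ball μ r))
    (hv : AnalyticOnNhd ℂ v (ball μ r))
    (hux : ∀ z ∈ ball μ r, u z ∈ D ∧ z • u z - A (u z) = x)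
    (hvx : ∀ z ∈ ball μ r, v z ∈ D ∧ z • v z - A (v z) = x) :
    EqOn u v (ball μ r) := fun z hz =>
  sub_eq_zero.1 <| hS r hr (u - v) (hu.sub hv) (fun w hw => by
    obtain ⟨hDu, hAu⟩ := hux w hw
    obtain ⟨hDv, hAv⟩ := hvx w hw
    obtain ⟨hD, hAsub⟩ := hA.sub_mem_and_map_sub hDu hDv
    refine ⟨hD, ?_⟩
    rw [Pi.sub_apply, hAsub, smul_sub, sub_sub_sub_comm, hAu, hAv, sub_self]) z hz

lemma eq_pow_smul_of_hasSVEPAt (hA : IsGenerator T D A) (hSVEP : ∀ μ : ℂ, HasSVEPAt D A μ)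
    {x : X} {R : ℂ → X} (hRan : AnalyticOnNhd ℂ R {z | 0 < z.re})
    (hR : ∀ z : ℂ, 0 < z.re → R z ∈ D ∧ z • R z - A (R z) = x) {n : ℕ} {r : ℝ} {f : ℂ → X}
    (hf : AnalyticOnNhd ℂ f (ball 0 r))
    (hsol : ∀ z ∈ ball 0 r, z ≠ 0 →
      z⁻¹ ^ n • f z ∈ D ∧ z • (z⁻¹ ^ n • f z) - A (z⁻¹ ^ n • f z) = x)
    {t : ℝ} (ht : 0 < t) (htr : t < r / 2) :
    f t = (t : ℂ) ^ n • R t := by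
  have hball : ∀ z ∈ ball (t : ℂ) t, z ∈ ball 0 r ∧ 0 < z.re := fun z hz => by
    rw [mem_ball_iff_norm] at hz
    refine ⟨?_, ?_⟩
    · rw [mem_ball_zero_iff]
      calc ‖z‖ ≤ ‖z - t‖ + ‖(t : ℂ)‖ := norm_le_norm_sub_add z t
        _ < r := by rw [Complex.norm_real, Real.norm_of_nonneg ht.le]; linarith
    · have := (Complex.abs_re_le_norm (z - t)).trans_lt hz
      rw [Complex.sub_re, Complex.ofReal_re] at this
      linarith [(abs_lt.1 this).1]
  have hz0 : ∀ z ∈ ball (t : ℂ) t, z ≠ 0 := fun z hz h => by simpa [h] using (hball z hz).2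
  have heq := hA.eqOn_ball_of_hasSVEPAt (hSVEP t) ht (u := fun z => z⁻¹ ^ n • f z) (v := R)
    (fun z hz => ((analyticAt_id.inv (hz0 z hz)).pow n).smul (hf z (hball z hz).1))
    (hRan.mono fun z hz => (hball z hz).2) (fun z hz => hsol z (hball z hz).1 (hz0 z hz))
    (fun z hz => hR z (hball z hz).2) (mem_ball_self ht)
  rw [← heq, smul_smul, ← mul_pow, mul_inv_cancel₀ (hz0 _ (mem_ball_self ht)), one_pow,
    one_smul]

end IsGenerator

noncomputable def orbitIntegral {X : Type*} [NormedAddCommGroup X] [NormedSpace ℂ X]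
    (T : ℝ → X →L[ℂ] X) (x : X) (s : ℝ) : X :=
  ∫ u in (0 : ℝ)..s, T u x

namespace IsC0Semigroup

variable {X : Type*} [NormedAddCommGroup X] [NormedSpace ℂ X] {T : ℝ → X →L[ℂ] X}

lemma intervalIntegrable_orbit (hT : IsC0Semigroup T) (x : X) {a b : ℝ} (ha : 0 ≤ a)
    (hb : 0 ≤ b) : IntervalIntegrable (fun s => T s x) volume a b :=
  ((hT.strong_continuity x).mono fun _ hs => (le_min ha hb).trans hs.1).intervalIntegrable

lemma continuousOn_orbitIntegral (hT : IsC0Semigroup T) (x : X) :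
    ContinuousOn (orbitIntegral T x) (Ici 0) := fun s (hs : 0 ≤ s) =>
  (intervalIntegral.continuousWithinAt_primitive (b₁ := 0) (b₂ := s + 1) (measure_singleton s)
    (hT.intervalIntegrable_orbit x (by simp) (by simp))).mono_of_mem_nhdsWithin
    (by rw [← Ici_inter_Iic]; exact inter_mem_nhdsWithin _ (Iic_mem_nhds (lt_add_one s)))

lemma exists_norm_orbitIntegral_le (hT : IsC0Semigroup T) {x : X}
    (herg : ∃ y : X, Tendsto (fun t : ℝ => cesaro T t x) atTop (𝓝 y)) :
    ∃ M, 0 ≤ M ∧ ∀ s, 0 ≤ s → ‖orbitIntegral T x s‖ ≤ M * (1 + s) := by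
  obtain ⟨y, hy⟩ := herg
  obtain ⟨t₀, ht₀⟩ := eventually_atTop.1 (hy.norm.eventually_le_const (lt_add_one ‖y‖))
  obtain ⟨C, hC⟩ := (isCompact_Icc (a := 0) (b := max t₀ 0)).exists_bound_of_continuousOn
    ((hT.continuousOn_orbitIntegral x).mono fun _ hs => hs.1)
  refine ⟨max C (‖y‖ + 1), by positivity, fun s hs => ?_⟩
  rcases le_or_gt s (max t₀ 0) with hst | hst
  · calc ‖orbitIntegral T x s‖ ≤ C := hC s ⟨hs, hst⟩
      _ ≤ max C (‖y‖ + 1) * 1 := by simp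
      _ ≤ max C (‖y‖ + 1) * (1 + s) := by gcongr; linarith
  · have hs0 : 0 < s := (le_max_right _ _).trans_lt hst
    have hcesaro : orbitIntegral T x s = s • cesaro T s x := by
      rw [cesaro, smul_smul, mul_inv_cancel₀ hs0.ne', one_smul, orbitIntegral]
    calc ‖orbitIntegral T x s‖ = s * ‖cesaro T s x‖ := by
          rw [hcesaro, norm_smul, Real.norm_of_nonneg hs]
      _ ≤ s * max C (‖y‖ + 1) := by
          gcongr
          exact (ht₀ s ((le_max_left _ _).trans hst.le)).trans (le_max_right _ _)
      _ ≤ max C (‖y‖ + 1) * (1 + s) := by nlinarith [le_max_right C (‖y‖ + 1), norm_nonneg y]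

variable [CompleteSpace X]

lemma apply_orbitIntegral (hT : IsC0Semigroup T) (x : X) {h s : ℝ} (hh : 0 ≤ h) (hs : 0 ≤ s) :
    T h (orbitIntegral T x s) = orbitIntegral T x (s + h) - orbitIntegral T x h := by
  rw [orbitIntegral, ← (T h).intervalIntegral_comp_comm (hT.intervalIntegrable_orbit x le_rfl hs),
    orbitIntegral, orbitIntegral, intervalIntegral.integral_interval_sub_left
      (hT.intervalIntegrable_orbit x le_rfl (by linarith))
      (hT.intervalIntegrable_orbit x le_rfl hh), add_comm s]
  have hshift := intervalIntegral.integral_comp_add_left (fun u => T u x) h (a := 0) (b := s)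
  rw [add_zero] at hshift
  rw [← hshift]
  refine intervalIntegral.integral_congr fun u hu => ?_
  rw [uIcc_of_le hs] at hu
  simp [hT.map_add h u hh hu.1]

lemma apply_laplaceTransform_orbitIntegral (hT : IsC0Semigroup T) (x : X) {z : ℂ}
    (hz : 0 < z.re)
    (hint : IntegrableOn (fun s : ℝ => Complex.exp (-z * s) • orbitIntegral T x s) (Ioi 0))
    {h : ℝ} (hh : 0 ≤ h) :
    T h (laplaceTransform (orbitIntegral T x) z) =
      Complex.exp (z * h) • (laplaceTransform (orbitIntegral T x) z -
        ∫ s in (0 : ℝ)..h, Complex.exp (-z * s) • orbitIntegral T x s) -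
      z⁻¹ • orbitIntegral T x h := by
  rw [eq_sub_iff_add_eq, ← integral_cexp_neg_mul_smul_comp_add hint hh, laplaceTransform,
    ← (T h).integral_comp_comm hint, ← integral_cexp_neg_mul_Ioi hz, ← integral_smul_const,
    ← integral_add ((T h).integrable_comp hint)
      ((integrableOn_exp_mul_complex_Ioi (by simpa using hz) 0).smul_const _)]
  refine setIntegral_congr_fun measurableSet_Ioi fun s (hs : 0 < s) => ?_
  rw [map_smul, hT.apply_orbitIntegral x hh hs.le, smul_sub, sub_add_cancel]

end IsC0Semigroup

namespace IsGenerator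

variable {X : Type*} [NormedAddCommGroup X] [NormedSpace ℂ X] [CompleteSpace X]
  {T : ℝ → X →L[ℂ] X} {D : Set X} {A : X → X}

lemma laplaceTransform_orbitIntegral_mem (hT : IsC0Semigroup T) (hA : IsGenerator T D A) (x : X)
    {z : ℂ} (hz : 0 < z.re)
    (hint : IntegrableOn (fun s : ℝ => Complex.exp (-z * s) • orbitIntegral T x s) (Ioi 0)) :
    laplaceTransform (orbitIntegral T x) z ∈ D ∧
      A (laplaceTransform (orbitIntegral T x) z) =
        z • laplaceTransform (orbitIntegral T x) z - z⁻¹ • x := by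
  set F := orbitIntegral T x
  set L := laplaceTransform F z
  set J : ℝ → X := fun h => ∫ s in (0 : ℝ)..h, Complex.exp (-z * s) • F s
  have hquot : ∀ h : ℝ, 0 < h → h⁻¹ • (T h L - L) =
      ((h : ℂ)⁻¹ * (Complex.exp (z * h) - 1)) • L - Complex.exp (z * h) • (h⁻¹ • J h) -
        z⁻¹ • (h⁻¹ • F h) := fun h hh => by
    rw [hT.apply_laplaceTransform_orbitIntegral x hz hint hh.le]
    module
  have hslope :
      Tendsto (fun h : ℝ => (h : ℂ)⁻¹ * (Complex.exp (z * h) - 1)) (𝓝[>] 0) (𝓝 z) := by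
    simpa using (((hasDerivAt_id (0 : ℝ)).ofReal_comp.const_mul z).cexp).tendsto_slope_zero_right
  have hexp : Tendsto (fun h : ℝ => Complex.exp (z * h)) (𝓝[>] 0) (𝓝 1) := by
    simpa using ((by fun_prop : Continuous fun h : ℝ => Complex.exp (z * h)).tendsto 0).mono_left
      nhdsWithin_le_nhds
  have hJ : Tendsto (fun h : ℝ => h⁻¹ • J h) (𝓝[>] 0) (𝓝 0) := by
    have hφ : Tendsto (fun h : ℝ => h⁻¹ • J h) (𝓝[>] 0)
        (𝓝 (Complex.exp (-z * (0 : ℝ)) • F 0)) := tendsto_inv_smul_intervalIntegral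
      ((by fun_prop : Continuous fun s : ℝ => Complex.exp (-z * s)).continuousOn.smul
        (hT.continuousOn_orbitIntegral x))
    rwa [show F 0 = 0 by simp [F, orbitIntegral], smul_zero] at hφ
  have hF : Tendsto (fun h : ℝ => h⁻¹ • F h) (𝓝[>] 0) (𝓝 x) := by
    have hφ : Tendsto (fun h : ℝ => h⁻¹ • F h) (𝓝[>] 0) (𝓝 (T 0 x)) :=
      tendsto_inv_smul_intervalIntegral (hT.strong_continuity x)
    rwa [hT.map_zero, one_apply_eq_self] at hφ
  refine hA.mem_and_eq_of_tendsto (Tendsto.congr' ?_ (by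
    simpa using ((hslope.smul_const L).sub (hexp.smul hJ)).sub (hF.const_smul z⁻¹)))
  filter_upwards [self_mem_nhdsWithin] with h hh
  exact (hquot h hh).symm

lemma exists_analytic_solution_of_tendsto_cesaro (hT : IsC0Semigroup T) (hA : IsGenerator T D A)
    {x : X} (herg : ∃ y : X, Tendsto (fun t : ℝ => cesaro T t x) atTop (𝓝 y)) :
    ∃ R : ℂ → X, ∃ C : ℝ, AnalyticOnNhd ℂ R {z | 0 < z.re} ∧
      (∀ z : ℂ, 0 < z.re → R z ∈ D ∧ z • R z - A (R z) = x) ∧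
      ∀ t : ℝ, 0 < t → ‖R t‖ ≤ C * (1 + t⁻¹) := by
  obtain ⟨M, hM0, hM⟩ := hT.exists_norm_orbitIntegral_le herg
  set F := orbitIntegral T x
  have hmeas : AEStronglyMeasurable F (volume.restrict (Ioi 0)) :=
    ((hT.continuousOn_orbitIntegral x).mono Ioi_subset_Ici_self).aestronglyMeasurable
      measurableSet_Ioi
  have hgrowth : ∀ ε : ℝ, 0 < ε → ∀ s : ℝ, 0 < s →
      ‖F s‖ ≤ M * (1 + ε⁻¹) * Real.exp (ε * s) := fun ε hε s hs =>
    calc ‖F s‖ ≤ M * (1 + s) := hM s hs.le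
      _ ≤ M * ((1 + ε⁻¹) * Real.exp (ε * s)) := by
          gcongr
          nlinarith [Real.le_inv_mul_exp_mul hε s, Real.one_le_exp (by positivity : 0 ≤ ε * s)]
      _ = M * (1 + ε⁻¹) * Real.exp (ε * s) := by ring
  refine ⟨fun z => z • laplaceTransform F z, 4 * M, fun z (hz : 0 < z.re) => ?_,
    fun z hz => ?_, fun t ht => ?_⟩
  · exact analyticAt_id.smul (analyticOnNhd_laplaceTransform hmeas
      (hgrowth (z.re / 2) (by linarith)) z (show z.re / 2 < z.re by linarith))
  · obtain ⟨hD, hAL⟩ := hA.laplaceTransform_orbitIntegral_mem hT x hz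
      (integrableOn_cexp_neg_mul_smul hmeas (hgrowth (z.re / 2) (by linarith)) (by linarith))
    obtain ⟨hD', hAz⟩ := hA.smul_mem_and_map_smul hD z
    refine ⟨hD', ?_⟩
    have hz0 : z ≠ 0 := fun h => by simp [h] at hz
    rw [hAz, hAL, smul_sub, smul_smul z z⁻¹, mul_inv_cancel₀ hz0, one_smul, sub_sub_cancel]
  · have hL := norm_laplaceTransform_le (hgrowth (t / 2) (by positivity)) (z := t)
      (by simp only [Complex.ofReal_re]; linarith)
    simp only [Complex.ofReal_re] at hL
    calc ‖(t : ℂ) • laplaceTransform F t‖ = t * ‖laplaceTransform F t‖ := by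
          rw [norm_smul, Complex.norm_real, Real.norm_of_nonneg ht.le]
      _ ≤ t * (M * (1 + (t / 2)⁻¹) / (t - t / 2)) := by gcongr
      _ = 2 * M * (1 + 2 * t⁻¹) := by field_simp; ring
      _ ≤ 4 * M * (1 + t⁻¹) := by nlinarith [inv_pos.2 ht]

end IsGenerator

theorem pole_order_le_one_of_localMeanErgodic_general
    {X : Type*} [NormedAddCommGroup X] [NormedSpace ℂ X] [CompleteSpace X]
    (T : ℝ → X →L[ℂ] X) (D : Set X) (A : X → X)
    (hT : IsC0Semigroup T) (hA : IsGenerator T D A)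
    (hSVEP : ∀ μ : ℂ, HasSVEPAt D A μ) (x : X)
    (herg : ∃ y : X, Tendsto (fun t : ℝ => cesaro T t x) atTop (𝓝 y))
    (n : ℕ) (hpole : IsLocalPoleOfOrder D A x 0 n) :
    n ≤ 1 := by
  by_contra! hn
  obtain ⟨R, C, hRan, hR, hRle⟩ := hA.exists_analytic_solution_of_tendsto_cesaro hT herg
  obtain ⟨-, r, hr, -, f, hf, hf0, hsol⟩ := hpole
  simp only [sub_zero] at hsol
  have hle : ∀ᶠ t : ℝ in 𝓝[>] 0, ‖f t‖ ≤ C * (t ^ n + t ^ (n - 1)) := by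
    filter_upwards [Ioo_mem_nhdsGT (half_pos hr)] with t ⟨ht, htr⟩
    rw [hA.eq_pow_smul_of_hasSVEPAt hSVEP hRan hR hf hsol ht htr, norm_smul, norm_pow,
      Complex.norm_real, Real.norm_of_nonneg ht.le]
    calc t ^ n * ‖R t‖ ≤ t ^ n * (C * (1 + t⁻¹)) := by gcongr; exact hRle t ht
      _ = C * (t ^ n + t ^ (n - 1)) := by
          rw [← Nat.sub_add_cancel hn.le, pow_succ, Nat.add_sub_cancel]
          field_simp
  have hlim : Tendsto (fun t : ℝ => C * (t ^ n + t ^ (n - 1))) (𝓝[>] 0) (𝓝 0) := by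
    have hcont : Continuous fun t : ℝ => C * (t ^ n + t ^ (n - 1)) := by fun_prop
    simpa [zero_pow (by omega : n ≠ 0), zero_pow (by omega : n - 1 ≠ 0)] using
      (hcont.tendsto 0).mono_left nhdsWithin_le_nhds
  have hflim : Tendsto (fun t : ℝ => ‖f t‖) (𝓝[>] 0) (𝓝 ‖f 0‖) :=
    ((hf 0 (mem_ball_self hr)).continuousAt.comp_of_eq Complex.continuous_ofReal.continuousAt
      Complex.ofReal_zero).norm.mono_left nhdsWithin_le_nhds
  exact hf0 (norm_le_zero_iff.1 (le_of_tendsto_of_tendsto hflim hlim hle))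

/-- If `A` has the SVEP, `T(t)` is local mean ergodic at `x`, and `0` is a pole of order
`n ≥ 1` of the local resolvent function of `A` at `x`, then `n ≤ 1`. -/
theorem pole_order_le_one_of_localMeanErgodic
    {X : Type*} [NormedAddCommGroup X] [NormedSpace ℂ X] [CompleteSpace X]
    (T : ℝ → X →L[ℂ] X) (D : Set X) (A : X → X)
    (hT : IsC0Semigroup T) (hA : IsGenerator T D A)
    (hSVEP : ∀ μ : ℂ, HasSVEPAt D A μ) (x : X)
    (herg : ∃ y : X, Tendsto (fun t : ℝ => cesaro T t x) atTop (𝓝 y))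
    (n : ℕ) (hn : 1 ≤ n) (hpole : IsLocalPoleOfOrder D A x 0 n) :
    n ≤ 1 :=
  pole_order_le_one_of_localMeanErgodic_general T D A hT hA hSVEP x herg n hpole
end

section
/- Let (T(t))_{t≥0} be a C₀-semigroup on a complex Banach space X with infinitesimal generator A such that ‖T(t)x‖/t → 0 as t → ∞ for every x ∈ X. Suppose 0 is a pole of the resolvent function of A, i.e. there exist n ≥ 1 and r > 0 such that every λ with 0 < |λ| < r belongs to ρ(A) and λ ↦ λⁿ R(λ,A) is bounded in operator norm on {λ : 0 < |λ| < r}. Then T(t) is mean ergodic: lim_{t→∞} C(t)x exists for every x ∈ X. -/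
/-!
The resolvent identity makes `R` holomorphic on the punctured disc, and since `λⁿ R(λ)` is
bounded, `0` is a removable singularity of `λⁿ R(λ)`. The growth condition `‖T(t)x‖ = o(t)`
gives the Abelian estimate `ε² R(ε)x → 0` as `ε → 0⁺` (`R(ε)` is the Laplace transform of `T`),
which lowers the order of the pole step by step until `λ R(λ) = P + λ Q(λ)` with `Q`
holomorphic at `0`. Passing to the limit `λ → 0` in the resolvent equations, through the closed
operator `A`, gives `A P = 0` and `A Q(0) = P - I`. Hence `x = P x - A y` with `y = Q(0) x`, so
`C(t)x = P x - t⁻¹ (T(t)y - y) → P x`.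
-/

open Filter Topology Metric

theorem exists_norm_le_mul_add_of_tendsto_norm_div {E : Type*} [NormedAddCommGroup E]
    {f : ℝ → E} (hf : ContinuousOn f (Set.Ici 0))
    (hlim : Tendsto (fun t => ‖f t‖ / t) atTop (𝓝 0)) {δ : ℝ} (hδ : 0 < δ) :
    ∃ C, 0 ≤ C ∧ ∀ s, 0 ≤ s → ‖f s‖ ≤ δ * s + C := by
  obtain ⟨s₀, hs₀⟩ :=
    eventually_atTop.1 ((hlim.eventually_lt_const hδ).and (eventually_gt_atTop 0))
  obtain ⟨C, hC⟩ := (isCompact_Icc (a := 0) (b := s₀)).exists_bound_of_continuousOn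
    (hf.mono Set.Icc_subset_Ici_self)
  refine ⟨max C 0, le_max_right _ _, fun s hs => ?_⟩
  rcases le_total s s₀ with hle | hle
  · nlinarith [hC s ⟨hs, hle⟩, le_max_left C 0]
  · obtain ⟨hlt, hpos⟩ := hs₀ s hle
    rw [div_lt_iff₀ hpos] at hlt
    linarith [le_max_right C 0]

theorem integral_exp_neg_mul_mul_add_le {ε δ C t : ℝ} (hε : 0 < ε) (hδ : 0 ≤ δ) (hC : 0 ≤ C)
    (ht : 0 ≤ t) : ∫ s in (0 : ℝ)..t, Real.exp (-ε * s) * (δ * s + C) ≤ δ / ε ^ 2 + C / ε := by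
  set F : ℝ → ℝ := fun s => -(Real.exp (-ε * s) * (δ * s / ε + (δ / ε ^ 2 + C / ε)))
  have hF : ∀ s, HasDerivAt F (Real.exp (-ε * s) * (δ * s + C)) s := fun s =>
    ((((hasDerivAt_id' s).const_mul (-ε)).exp).mul
      ((((hasDerivAt_id' s).const_mul δ).div_const ε).add_const _)).neg.congr_deriv
      (by field_simp; ring)
  rw [intervalIntegral.integral_eq_sub_of_hasDerivAt (fun s _ => hF s)
    (by apply Continuous.intervalIntegrable; fun_prop)]
  have hFt : F t ≤ 0 := by simp only [F, neg_nonpos]; positivity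
  simp only [F, mul_zero, Real.exp_zero, zero_div, zero_add, one_mul] at hFt ⊢
  linarith

namespace IsC0Semigroup

variable {X : Type*} [NormedAddCommGroup X] [NormedSpace ℂ X] {T : ℝ → X →L[ℂ] X}
  {D : Set X} {A : X → X}

theorem continuousOn_Icc_apply (hT : IsC0Semigroup T) (x : X) (t : ℝ) :
    ContinuousOn (fun s => T s x) (Set.Icc 0 t) :=
  (hT.strong_continuity x).mono Set.Icc_subset_Ici_self

theorem intervalIntegrable_apply (hT : IsC0Semigroup T) (x : X) {t : ℝ} (ht : 0 ≤ t) :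
    IntervalIntegrable (fun s => T s x) MeasureTheory.volume 0 t :=
  (hT.continuousOn_Icc_apply x t).intervalIntegrable_of_Icc ht

theorem hasDerivWithinAt_apply (hT : IsC0Semigroup T) (hA : IsGenerator T D A) {y : X}
    (hy : y ∈ D) {t : ℝ} (ht : 0 ≤ t) :
    HasDerivWithinAt (fun s => T s y) (T t (A y)) (Set.Ioi t) t := by
  rw [hasDerivWithinAt_iff_tendsto_slope' (Set.self_notMem_Ioi (a := t))]
  have hshift : Tendsto (fun u => u - t) (𝓝[>] t) (𝓝[>] 0) := by
    simpa using (continuous_sub_right t).continuousWithinAt.tendsto_nhdsWithin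
      (s := Set.Ioi t) (x := t) (t := Set.Ioi 0) fun u (hu : t < u) => sub_pos.2 hu
  refine (((T t).continuous.tendsto _).comp ((hA.tendsto_of_mem y hy).comp hshift)).congr' ?_
  filter_upwards [self_mem_nhdsWithin] with u (hu : t < u)
  have hsplit : T u y = T t (T (u - t) y) := by
    rw [← ContinuousLinearMap.comp_apply, ← hT.map_add t _ ht (sub_pos.2 hu).le, add_sub_cancel]
  simp only [Function.comp_apply, slope_def_module]
  rw [hsplit, (T t).map_smul_of_tower, map_sub]

theorem apply_eq_self_of_generator_eq_zero [CompleteSpace X] (hT : IsC0Semigroup T)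
    (hA : IsGenerator T D A) {w : X} (hw : w ∈ D) (hAw : A w = 0) {t : ℝ} (ht : 0 ≤ t) :
    T t w = w :=
  sub_eq_zero.1 (by simpa [hAw] using (hT.integral_apply_generator hA hw ht).symm)

theorem cesaro_sub_generator [CompleteSpace X] (hT : IsC0Semigroup T)
    (hA : IsGenerator T D A) {w y : X} (hw : w ∈ D) (hAw : A w = 0) (hy : y ∈ D) {t : ℝ}
    (ht : 0 < t) : cesaro T t (w - A y) = w - t⁻¹ • (T t y - y) := by
  have hTw : ∫ s in (0 : ℝ)..t, T s w = t • w := by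
    rw [intervalIntegral.integral_congr (g := fun _ => w), intervalIntegral.integral_const,
      sub_zero]
    intro s hs
    rw [Set.uIcc_of_le ht.le] at hs
    exact hT.apply_eq_self_of_generator_eq_zero hA hw hAw hs.1
  simp only [cesaro, map_sub]
  rw [intervalIntegral.integral_sub (hT.intervalIntegrable_apply _ ht.le)
    (hT.intervalIntegrable_apply _ ht.le), hTw, hT.integral_apply_generator hA hy ht.le,
    smul_sub, inv_smul_smul₀ ht.ne']

theorem tendsto_cesaro_sub_generator [CompleteSpace X] (hT : IsC0Semigroup T)
    (hA : IsGenerator T D A) {w y : X} (hw : w ∈ D) (hAw : A w = 0) (hy : y ∈ D)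
    (hgy : Tendsto (fun t => ‖T t y‖ / t) atTop (𝓝 0)) :
    Tendsto (fun t => cesaro T t (w - A y)) atTop (𝓝 w) := by
  have hTy : Tendsto (fun t : ℝ => t⁻¹ • T t y) atTop (𝓝 0) := by
    refine tendsto_zero_iff_norm_tendsto_zero.2 (hgy.congr' ?_)
    filter_upwards [eventually_gt_atTop 0] with t ht
    rw [norm_smul, norm_inv, Real.norm_of_nonneg ht.le, inv_mul_eq_div]
  have hlim := tendsto_const_nhds (x := w) |>.sub (hTy.sub (tendsto_inv_atTop_zero.smul_const y))
  rw [zero_smul, sub_zero, sub_zero] at hlim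
  refine hlim.congr' ?_
  filter_upwards [eventually_gt_atTop 0] with t ht
  rw [hT.cesaro_sub_generator hA hw hAw hy ht, smul_sub]

theorem integral_exp_neg_smul_apply [CompleteSpace X] (hT : IsC0Semigroup T)
    (hA : IsGenerator T D A) {x y : X} (hy : y ∈ D) {ε : ℝ} (hxy : A y = ε • y - x) {t : ℝ}
    (ht : 0 ≤ t) :
    ∫ s in (0 : ℝ)..t, Real.exp (-ε * s) • T s x = y - Real.exp (-ε * t) • T t y := by
  have hexp : Continuous fun s : ℝ => Real.exp (-ε * s) := by fun_prop
  have hderiv : ∀ s ∈ Set.Ioo 0 t, HasDerivWithinAt (fun s => -(Real.exp (-ε * s) • T s y))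
      (Real.exp (-ε * s) • T s x) (Set.Ioi s) s := by
    intro s hs
    refine ((((hasDerivAt_id' s).const_mul (-ε)).exp.hasDerivWithinAt.smul
      (hT.hasDerivWithinAt_apply hA hy hs.1.le)).neg).congr_deriv ?_
    rw [hxy, map_sub, (T s).map_smul_of_tower]
    module
  rw [intervalIntegral.integral_eq_sub_of_hasDeriv_right_of_le ht
    (f := fun s => -(Real.exp (-ε * s) • T s y))
    (hexp.continuousOn.smul (hT.continuousOn_Icc_apply y t)).neg hderiv
    ((hexp.continuousOn.smul (hT.continuousOn_Icc_apply x t)).intervalIntegrable_of_Icc ht)]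
  simp only [mul_zero, Real.exp_zero, one_smul, hT.map_zero, one_apply_eq_self]
  abel

theorem norm_le_of_generator_eq [CompleteSpace X] (hT : IsC0Semigroup T)
    (hA : IsGenerator T D A) {x y : X} (hy : y ∈ D) {ε : ℝ} (hxy : A y = ε • y - x)
    (hε : 0 < ε) {δ C : ℝ} (hδ : 0 ≤ δ) (hC : 0 ≤ C) (hx : ∀ s, 0 ≤ s → ‖T s x‖ ≤ δ * s + C)
    (hgy : Tendsto (fun t => ‖T t y‖ / t) atTop (𝓝 0)) :
    ‖y‖ ≤ δ / ε ^ 2 + C / ε := by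
  have hle : ∀ t, 0 ≤ t → ‖y‖ ≤ Real.exp (-ε * t) * ‖T t y‖ + (δ / ε ^ 2 + C / ε) := by
    intro t ht
    have hint : ‖∫ s in (0 : ℝ)..t, Real.exp (-ε * s) • T s x‖ ≤
        ∫ s in (0 : ℝ)..t, Real.exp (-ε * s) * (δ * s + C) := by
      refine intervalIntegral.norm_integral_le_of_norm_le ht
        (MeasureTheory.ae_of_all _ fun s hs => ?_) (by apply Continuous.intervalIntegrable; fun_prop)
      rw [norm_smul, Real.norm_of_nonneg (Real.exp_pos _).le]
      exact mul_le_mul_of_nonneg_left (hx s hs.1.le) (Real.exp_pos _).le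
    calc ‖y‖ = ‖Real.exp (-ε * t) • T t y + ∫ s in (0 : ℝ)..t, Real.exp (-ε * s) • T s x‖ := by
          rw [hT.integral_exp_neg_smul_apply hA hy hxy ht, add_sub_cancel]
      _ ≤ ‖Real.exp (-ε * t) • T t y‖ + ‖∫ s in (0 : ℝ)..t, Real.exp (-ε * s) • T s x‖ :=
          norm_add_le _ _
      _ ≤ _ := by
          rw [norm_smul, Real.norm_of_nonneg (Real.exp_pos _).le]
          gcongr
          exact hint.trans (integral_exp_neg_mul_mul_add_le hε hδ hC ht)
  have hdecay : Tendsto (fun t => Real.exp (-ε * t) * ‖T t y‖) atTop (𝓝 0) := by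
    have h := (tendsto_rpow_mul_exp_neg_mul_atTop_nhds_zero 1 ε hε).mul hgy
    rw [zero_mul] at h
    refine h.congr' ?_
    filter_upwards [eventually_gt_atTop 0] with t ht
    rw [Real.rpow_one]
    field_simp
  have hlim := hdecay.add_const (δ / ε ^ 2 + C / ε)
  rw [zero_add] at hlim
  refine ge_of_tendsto hlim ?_
  filter_upwards [eventually_ge_atTop 0] with t ht using hle t ht

theorem tendsto_sq_smul_of_generator_eq [CompleteSpace X] (hT : IsC0Semigroup T)
    (hA : IsGenerator T D A) (hg : ∀ v, Tendsto (fun t => ‖T t v‖ / t) atTop (𝓝 0)) {x : X}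
    {y : ℝ → X} (hy : ∀ᶠ ε in 𝓝[>] 0, y ε ∈ D ∧ A (y ε) = ε • y ε - x) :
    Tendsto (fun ε => ε ^ 2 • y ε) (𝓝[>] 0) (𝓝 0) := by
  rw [Metric.tendsto_nhds]
  intro δ hδ
  obtain ⟨C, hC, hxC⟩ :=
    exists_norm_le_mul_add_of_tendsto_norm_div (hT.strong_continuity x) (hg x) (half_pos hδ)
  filter_upwards [hy, Ioo_mem_nhdsGT (show 0 < δ / 2 / (C + 1) by positivity)]
    with ε ⟨hyD, hAy⟩ ⟨hε, hεδ⟩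
  have hb := hT.norm_le_of_generator_eq hA hyD hAy hε (half_pos hδ).le hC hxC (hg _)
  rw [lt_div_iff₀ (by positivity)] at hεδ
  rw [dist_zero_right, norm_smul, Real.norm_of_nonneg (by positivity)]
  calc ε ^ 2 * ‖y ε‖ ≤ ε ^ 2 * (δ / 2 / ε ^ 2 + C / ε) := by gcongr
    _ = δ / 2 + C * ε := by field_simp
    _ < δ := by nlinarith

end IsC0Semigroup

section PoleOrder

variable {E : Type*} [NormedAddCommGroup E] [NormedSpace ℂ E]
  {F : Type*} [NormedAddCommGroup F] [NormedSpace ℂ F] [CompleteSpace F] {r : ℝ}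

theorem exists_differentiableOn_eq_pow_succ_smul (hr : 0 < r) {f : ℂ → F} {n : ℕ}
    (hf : DifferentiableOn ℂ f (ball 0 r \ {0}))
    (hbdd : BddAbove (norm ∘ (fun μ => μ ^ n • f μ) '' (ball 0 r \ {0}))) :
    ∃ G : ℂ → F, DifferentiableOn ℂ G (ball 0 r) ∧
      ∀ μ ∈ ball (0 : ℂ) r \ {0}, G μ = μ ^ (n + 1) • f μ := by
  set H := Function.update (fun μ => μ ^ n • f μ) 0 (limUnder (𝓝[≠] 0) fun μ => μ ^ n • f μ)
  have hH : DifferentiableOn ℂ H (ball 0 r) :=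
    Complex.differentiableOn_update_limUnder_of_bddAbove (ball_mem_nhds 0 hr)
      ((differentiable_pow n).differentiableOn.smul hf) hbdd
  refine ⟨fun μ => μ • H μ, differentiableOn_id.smul hH, fun μ hμ => ?_⟩
  simp only [H, Function.update_of_ne hμ.2, smul_smul, pow_succ']

theorem eventually_ofReal_mem_ball_diff (hr : 0 < r) :
    ∀ᶠ ε : ℝ in 𝓝[>] 0, (ε : ℂ) ∈ ball (0 : ℂ) r \ {0} := by
  filter_upwards [Ioo_mem_nhdsGT hr] with ε hε
  exact ⟨by simpa [abs_of_pos hε.1] using hε.2, by simpa using hε.1.ne'⟩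

theorem exists_differentiableOn_eq_pow_smul_of_pow_succ (hr : 0 < r) {R : ℂ → E →L[ℂ] F}
    (hsq : ∀ v, Tendsto (fun ε : ℝ => (ε : ℂ) ^ 2 • R ε v) (𝓝[>] 0) (𝓝 0)) {k : ℕ}
    {G : ℂ → E →L[ℂ] F} (hG : DifferentiableOn ℂ G (ball 0 r))
    (hGR : ∀ μ ∈ ball (0 : ℂ) r \ {0}, G μ = μ ^ (k + 2) • R μ) :
    ∃ G' : ℂ → E →L[ℂ] F, DifferentiableOn ℂ G' (ball 0 r) ∧
      ∀ μ ∈ ball (0 : ℂ) r \ {0}, G' μ = μ ^ (k + 1) • R μ := by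
  have hofReal : Tendsto (fun ε : ℝ => (ε : ℂ)) (𝓝[>] 0) (𝓝 0) := by
    simpa using (Complex.continuous_ofReal.tendsto 0).mono_left nhdsWithin_le_nhds
  have hG0 : G 0 = 0 := by
    ext v
    have hlim : Tendsto (fun ε : ℝ => G ε v) (𝓝[>] 0) (𝓝 (G 0 v)) :=
      ((ContinuousLinearMap.apply ℂ F v).continuous.tendsto (G 0)).comp
        ((hG.continuousOn.continuousAt (ball_mem_nhds 0 hr)).tendsto.comp hofReal)
    have hzero : Tendsto (fun ε : ℝ => G ε v) (𝓝[>] 0) (𝓝 0) := by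
      have h := (hofReal.pow k).smul (hsq v)
      rw [smul_zero] at h
      refine h.congr' ?_
      filter_upwards [eventually_ofReal_mem_ball_diff hr] with ε hε
      rw [hGR _ hε, smul_smul, ← pow_add, smul_apply]
    exact tendsto_nhds_unique hlim hzero
  refine ⟨dslope G 0, (Complex.differentiableOn_dslope (ball_mem_nhds 0 hr)).2 hG,
    fun μ hμ => smul_right_injective _ hμ.2 ?_⟩
  have h := sub_smul_dslope G 0 μ
  rw [sub_zero, hG0, sub_zero] at h
  change μ • _ = μ • _
  rw [h, hGR μ hμ, smul_smul, ← pow_succ']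

theorem exists_differentiableOn_eq_smul_of_bddAbove (hr : 0 < r) {R : ℂ → E →L[ℂ] F}
    (hR : DifferentiableOn ℂ R (ball 0 r \ {0})) {n : ℕ}
    (hbdd : BddAbove (norm ∘ (fun μ => μ ^ n • R μ) '' (ball 0 r \ {0})))
    (hsq : ∀ v, Tendsto (fun ε : ℝ => (ε : ℂ) ^ 2 • R ε v) (𝓝[>] 0) (𝓝 0)) :
    ∃ G : ℂ → E →L[ℂ] F, DifferentiableOn ℂ G (ball 0 r) ∧
      ∀ μ ∈ ball (0 : ℂ) r \ {0}, G μ = μ • R μ := by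
  obtain ⟨G, hG, hGR⟩ := exists_differentiableOn_eq_pow_succ_smul hr hR hbdd
  clear hbdd
  induction n generalizing G with
  | zero => exact ⟨G, hG, by simpa using hGR⟩
  | succ k ih =>
    obtain ⟨G', hG', hG'R⟩ := exists_differentiableOn_eq_pow_smul_of_pow_succ hr hsq hG hGR
    exact ih G' hG' hG'R

end PoleOrder

structure IsResolvent {X : Type*} [NormedAddCommGroup X] [NormedSpace ℂ X]
    (D : Set X) (A : X → X) (μ : ℂ) (S : X →L[ℂ] X) : Prop where
  mapsTo : ∀ v, S v ∈ D
  right_inv : ∀ v, μ • S v - A (S v) = v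
  left_inv : ∀ v ∈ D, S (μ • v - A v) = v

namespace IsResolvent

variable {X : Type*} [NormedAddCommGroup X] [NormedSpace ℂ X]
  {D : Set X} {A : X → X} {μ ν : ℂ} {S S' : X →L[ℂ] X}

theorem generator_apply (hS : IsResolvent D A μ S) (v : X) : A (S v) = μ • S v - v := by
  linear_combination (norm := module) -hS.right_inv v

theorem smul_apply_of_generator_eq_zero (hS : IsResolvent D A μ S) {w : X} (hw : w ∈ D)
    (hAw : A w = 0) : μ • S w = w := by
  simpa [hAw] using hS.left_inv w hw

theorem sub_eq_smul_comp (hS : IsResolvent D A μ S) (hS' : IsResolvent D A ν S') :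
    S - S' = (ν - μ) • (S ∘L S') := by
  ext v
  have h := hS.left_inv (S' v) (hS'.mapsTo v)
  rw [hS'.generator_apply, show μ • S' v - (ν • S' v - v) = (μ - ν) • S' v + v by module,
    map_add, map_smul] at h
  simp only [sub_apply, smul_apply, ContinuousLinearMap.comp_apply]
  linear_combination (norm := module) h

theorem mem_and_generator_eq_of_tendsto (hS : IsResolvent D A μ S) {ι : Type*} {l : Filter ι}
    [l.NeBot] {f : ι → X} {x z : X} (hfD : ∀ᶠ i in l, f i ∈ D) (hf : Tendsto f l (𝓝 x))
    (hAf : Tendsto (fun i => A (f i)) l (𝓝 z)) : x ∈ D ∧ A x = z := by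
  have hlim : Tendsto f l (𝓝 (S (μ • x - z))) :=
    ((S.continuous.tendsto _).comp ((hf.const_smul μ).sub hAf)).congr'
      (hfD.mono fun i hi => hS.left_inv _ hi)
  have hx : S (μ • x - z) = x := tendsto_nhds_unique hlim hf
  rw [← hx]
  exact ⟨hS.mapsTo _, by rw [hS.generator_apply, hx, sub_sub_cancel]⟩

end IsResolvent

theorem differentiableOn_of_isResolvent {X : Type*} [NormedAddCommGroup X] [NormedSpace ℂ X]
    [CompleteSpace X] {D : Set X} {A : X → X} {R : ℂ → X →L[ℂ] X} {s : Set ℂ}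
    (hR : ∀ μ ∈ s, IsResolvent D A μ (R μ)) : DifferentiableOn ℂ R s := by
  intro μ hμ
  set u : ℂ → X →L[ℂ] X := fun ν => 1 + (ν - μ) • R μ
  have hu : ContinuousAt u μ := by fun_prop
  have hunit : ∀ᶠ ν in 𝓝 μ, IsUnit (u ν) :=
    hu.eventually_mem (Units.isOpen.mem_nhds (by simp [u]))
  have heq : ∀ᶠ ν in 𝓝[s] μ, R ν = Ring.inverse (u ν) * R μ := by
    filter_upwards [nhdsWithin_le_nhds hunit, self_mem_nhdsWithin] with ν hν hνs
    have hmul : u ν * R ν = R μ := by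
      rw [add_mul, one_mul, smul_mul_assoc, ContinuousLinearMap.mul_def,
        ← (hR μ hμ).sub_eq_smul_comp (hR ν hνs), add_sub_cancel]
    rw [← hmul, Ring.inverse_mul_cancel_left _ _ hν]
  have hd : DifferentiableAt ℂ (fun ν => Ring.inverse (u ν) * R μ) μ :=
    ((DifferentiableAt.inverse (by fun_prop) (by simp [u])).mul_const _)
  exact hd.differentiableWithinAt.congr_of_eventuallyEq heq (by simp [u])

section SimplePole

variable {X : Type*} [NormedAddCommGroup X] [NormedSpace ℂ X] {D : Set X} {A : X → X}
  {R G : ℂ → X →L[ℂ] X} {r : ℝ}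

theorem residue_apply_mem_and_generator_eq_zero (hr : 0 < r)
    (hR : ∀ μ ∈ ball (0 : ℂ) r \ {0}, IsResolvent D A μ (R μ))
    (hG : ContinuousAt G 0) (hGR : ∀ μ ∈ ball (0 : ℂ) r \ {0}, G μ = μ • R μ) (x : X) :
    G 0 x ∈ D ∧ A (G 0 x) = 0 := by
  obtain ⟨μ₀, hμ₀⟩ := (eventually_ofReal_mem_ball_diff hr).exists
  have hpunct : ∀ᶠ μ in 𝓝[≠] (0 : ℂ), μ ∈ ball (0 : ℂ) r \ {0} :=
    sdiff_mem_nhdsWithin_compl (ball_mem_nhds 0 hr) {0}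
  have hGx : Tendsto (fun μ => G μ x) (𝓝[≠] 0) (𝓝 (G 0 x)) :=
    ((ContinuousLinearMap.apply ℂ X x).continuous.tendsto _).comp
      (hG.tendsto.mono_left nhdsWithin_le_nhds)
  have hAGx : Tendsto (fun μ => μ • (G μ x - x)) (𝓝[≠] 0) (𝓝 0) := by
    simpa using (tendsto_nhdsWithin_of_tendsto_nhds tendsto_id).smul (hGx.sub_const x)
  refine (hR _ hμ₀).mem_and_generator_eq_of_tendsto ?_ hGx (hAGx.congr' ?_) <;>
    filter_upwards [hpunct] with μ hμ <;>
    rw [hGR μ hμ, smul_apply, ← map_smul]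
  · exact (hR μ hμ).mapsTo _
  · rw [(hR μ hμ).generator_apply, map_smul, smul_sub]

theorem dslope_apply_mem_and_generator_eq [CompleteSpace X] (hr : 0 < r)
    (hR : ∀ μ ∈ ball (0 : ℂ) r \ {0}, IsResolvent D A μ (R μ))
    (hG : DifferentiableOn ℂ G (ball 0 r)) (hGR : ∀ μ ∈ ball (0 : ℂ) r \ {0}, G μ = μ • R μ)
    (x : X) : dslope G 0 0 x ∈ D ∧ A (dslope G 0 0 x) = G 0 x - x := by
  obtain ⟨μ₀, hμ₀⟩ := (eventually_ofReal_mem_ball_diff hr).exists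
  have hpunct : ∀ᶠ μ in 𝓝[≠] (0 : ℂ), μ ∈ ball (0 : ℂ) r \ {0} :=
    sdiff_mem_nhdsWithin_compl (ball_mem_nhds 0 hr) {0}
  obtain ⟨hPD, hAP⟩ := residue_apply_mem_and_generator_eq_zero hr hR
    (hG.continuousOn.continuousAt (ball_mem_nhds 0 hr)) hGR x
  have hQ : ContinuousAt (dslope G 0) 0 :=
    ((Complex.differentiableOn_dslope (ball_mem_nhds 0 hr)).2 hG).continuousOn.continuousAt
      (ball_mem_nhds 0 hr)
  -- Near `0`, `dslope G 0 μ x = R μ x - μ⁻¹ • G 0 x = R μ (x - G 0 x)`.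
  have hf : Tendsto (fun μ => R μ (x - G 0 x)) (𝓝[≠] 0) (𝓝 (dslope G 0 0 x)) := by
    refine (((ContinuousLinearMap.apply ℂ X x).continuous.tendsto _).comp
      (hQ.tendsto.mono_left nhdsWithin_le_nhds)).congr' ?_
    filter_upwards [hpunct] with μ hμ
    refine smul_right_injective X hμ.2 ?_
    have h := sub_smul_dslope G 0 μ
    rw [sub_zero] at h
    simp only [Function.comp_apply, ContinuousLinearMap.apply_apply]
    rw [← smul_apply, h, map_sub, smul_sub, sub_apply, hGR μ hμ, smul_apply,
      (hR μ hμ).smul_apply_of_generator_eq_zero hPD hAP]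
  have hAf : Tendsto (fun μ => μ • R μ (x - G 0 x) - (x - G 0 x)) (𝓝[≠] 0)
      (𝓝 (G 0 x - x)) := by
    simpa using ((tendsto_nhdsWithin_of_tendsto_nhds tendsto_id).smul hf).sub_const (x - G 0 x)
  refine (hR _ hμ₀).mem_and_generator_eq_of_tendsto ?_ hf (hAf.congr' ?_) <;>
    filter_upwards [hpunct] with μ hμ
  · exact (hR μ hμ).mapsTo _
  · rw [(hR μ hμ).generator_apply]

end SimplePole

theorem tendsto_sq_smul_resolvent {X : Type*} [NormedAddCommGroup X] [NormedSpace ℂ X]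
    [CompleteSpace X] {T : ℝ → X →L[ℂ] X} {D : Set X} {A : X → X} (hT : IsC0Semigroup T)
    (hA : IsGenerator T D A) (hg : ∀ v, Tendsto (fun t => ‖T t v‖ / t) atTop (𝓝 0))
    {R : ℂ → X →L[ℂ] X} {r : ℝ} (hr : 0 < r)
    (hR : ∀ μ ∈ ball (0 : ℂ) r \ {0}, IsResolvent D A μ (R μ)) (v : X) :
    Tendsto (fun ε : ℝ => (ε : ℂ) ^ 2 • R ε v) (𝓝[>] 0) (𝓝 0) := by
  have h := hT.tendsto_sq_smul_of_generator_eq hA hg (x := v) (y := fun ε => R ε v) <| by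
    filter_upwards [eventually_ofReal_mem_ball_diff hr] with ε hε
    exact ⟨(hR _ hε).mapsTo v, by rw [(hR _ hε).generator_apply, Complex.coe_smul]⟩
  simpa [← Complex.coe_smul] using h

/-- If `‖T(t)x‖/t → 0` for every `x` and `0` is a pole of the resolvent of `A`
(i.e. some punctured disk around `0` lies in `ρ(A)`, with `λⁿ R(λ,A)` bounded in
operator norm there for some `n ≥ 1`), then `T(t)` is mean ergodic. -/
theorem meanErgodic_of_pole_of_resolvent
    {X : Type*} [NormedAddCommGroup X] [NormedSpace ℂ X] [CompleteSpace X]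
    (T : ℝ → X →L[ℂ] X) (D : Set X) (A : X → X)
    (hT : IsC0Semigroup T) (hA : IsGenerator T D A)
    (hgrowth : ∀ x : X, Tendsto (fun t : ℝ => ‖T t x‖ / t) atTop (𝓝 0))
    (hpole : ∃ n : ℕ, 1 ≤ n ∧ ∃ r : ℝ, 0 < r ∧ ∃ R : ℂ → X →L[ℂ] X,
      (∀ μ : ℂ, μ ≠ 0 → ‖μ‖ < r →
        (∀ v : X, R μ v ∈ D ∧ μ • R μ v - A (R μ v) = v) ∧
        ∀ v ∈ D, R μ (μ • v - A v) = v) ∧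
      ∃ M : ℝ, ∀ μ : ℂ, μ ≠ 0 → ‖μ‖ < r → ‖μ‖ ^ n * ‖R μ‖ ≤ M) :
    ∀ x : X, ∃ y : X, Tendsto (fun t : ℝ => cesaro T t x) atTop (𝓝 y) := by
  obtain ⟨n, -, r, hr, R, hres, M, hM⟩ := hpole
  have hR : ∀ μ ∈ ball (0 : ℂ) r \ {0}, IsResolvent D A μ (R μ) := fun μ hμ =>
    have h := hres μ hμ.2 (mem_ball_zero_iff.1 hμ.1)
    ⟨fun v => (h.1 v).1, fun v => (h.1 v).2, h.2⟩
  have hbdd : BddAbove (norm ∘ (fun μ => μ ^ n • R μ) '' (ball 0 r \ {0})) := by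
    refine ⟨M, ?_⟩
    rintro _ ⟨μ, hμ, rfl⟩
    exact (norm_smul_le _ _).trans (norm_pow μ n ▸ hM μ hμ.2 (mem_ball_zero_iff.1 hμ.1))
  obtain ⟨G, hG, hGR⟩ := exists_differentiableOn_eq_smul_of_bddAbove hr
    (differentiableOn_of_isResolvent hR) hbdd (tendsto_sq_smul_resolvent hT hA hgrowth hr hR)
  intro x
  obtain ⟨hPD, hAP⟩ := residue_apply_mem_and_generator_eq_zero hr hR
    (hG.continuousOn.continuousAt (ball_mem_nhds 0 hr)) hGR x
  obtain ⟨hQD, hAQ⟩ := dslope_apply_mem_and_generator_eq hr hR hG hGR x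
  refine ⟨G 0 x, ?_⟩
  have h := hT.tendsto_cesaro_sub_generator hA hPD hAP hQD (hgrowth _)
  rwa [hAQ, sub_sub_cancel] at h
end
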